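/- arXiv:2409.17105 — 4 statements merged into one kernel-verified Lean document; each statement's English description precedes it below -/
import Mathlib

section
/- Let x = (x_1, x_2) ∈ ℝ^2 with 1, x_1, x_2 linearly independent over ℚ. Suppose (p_n, q_n) is a sequence of best approximations with q_n < q_{n+1} and ||q_n x − p_n||_∞ < q_{n+1}^{−δ} for all large n, for some δ > 3/4. Then for infinitely many n one has ||q_n x − p_n||_∞ < q_n^{−(δ² − δ/2)/(1−δ)}; in particular x lies in the set of vectors with ordinary exponent at least (δ² − δ/2)/(1−δ). -/
private lemma cross_trans (u1 u2 u3 v1 v2 v3 w1 w2 w3 : ℤ)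
    (huv1 : u1*v2 = u2*v1) (huv2 : u1*v3 = u3*v1) (huv3 : u2*v3 = u3*v2)
    (hvw1 : v1*w2 = v2*w1) (hvw2 : v1*w3 = v3*w1) (hvw3 : v2*w3 = v3*w2)
    (hv : v1 ≠ 0 ∨ v2 ≠ 0 ∨ v3 ≠ 0) :
    u1*w2 = u2*w1 ∧ u1*w3 = u3*w1 ∧ u2*w3 = u3*w2 := by
  rcases hv with hv | hv | hv
  · refine ⟨mul_left_cancel₀ hv ?_, mul_left_cancel₀ hv ?_, mul_left_cancel₀ hv ?_⟩
    · linear_combination u1 * hvw1 + w1 * huv1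
    · linear_combination u1 * hvw2 + w1 * huv2
    · linear_combination u2 * hvw2 + w1 * huv3 - u3 * hvw1
  · refine ⟨mul_left_cancel₀ hv ?_, mul_left_cancel₀ hv ?_, mul_left_cancel₀ hv ?_⟩
    · linear_combination w2 * huv1 + u2 * hvw1
    · linear_combination u1 * hvw3 + w2 * huv2 + u3 * hvw1
    · linear_combination u2 * hvw3 + w2 * huv3
  · refine ⟨mul_left_cancel₀ hv ?_, mul_left_cancel₀ hv ?_, mul_left_cancel₀ hv ?_⟩
    · linear_combination -u1 * hvw3 + u2 * hvw2 + w3 * huv1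
    · linear_combination w3 * huv2 + u3 * hvw2
    · linear_combination w3 * huv3 + u3 * hvw3

private def wA (p : ℕ → Fin 2 → ℤ) (q : ℕ → ℕ) (n : ℕ) : ℤ :=
  p n 0 * p (n+1) 1 - p n 1 * p (n+1) 0

private def wB (p : ℕ → Fin 2 → ℤ) (q : ℕ → ℕ) (n : ℕ) : ℤ :=
  p n 1 * (q (n+1) : ℤ) - (q n : ℤ) * p (n+1) 1

private def wC (p : ℕ → Fin 2 → ℤ) (q : ℕ → ℕ) (n : ℕ) : ℤ :=
  (q n : ℤ) * p (n+1) 0 - p n 0 * (q (n+1) : ℤ)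

private def det3 (p : ℕ → Fin 2 → ℤ) (q : ℕ → ℕ) (n m : ℕ) : ℤ :=
  (q n : ℤ) * (p (n+1) 0 * p (m+1) 1 - p (n+1) 1 * p (m+1) 0)
  - (q (n+1) : ℤ) * (p n 0 * p (m+1) 1 - p n 1 * p (m+1) 0)
  + (q (m+1) : ℤ) * (p n 0 * p (n+1) 1 - p n 1 * p (n+1) 0)

set_option maxHeartbeats 1600000

/-- Let `x = (x 0, x 1) ∈ ℝ²` with `1, x 0, x 1` linearly independent over `ℚ`.
Suppose `(p n, q n)` is a sequence of best approximations with `q n < q (n+1)` and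
`‖q n • x - p n‖_∞ < (q (n+1)) ^ (-δ)` for all `n ≥ N₀`, for some `δ > 3/4`.
Then for infinitely many `n` we have
`‖q n • x - p n‖_∞ < (q n) ^ (-(δ² - δ/2)/(1 - δ))`; in particular `x` has ordinary
exponent at least `(δ² - δ/2)/(1 - δ)`, i.e. the corresponding system of inequalities
has solutions for arbitrarily large `Q`. -/
theorem high_uniform_implies_high_ordinary (x : Fin 2 → ℝ)
    (hirr : ∀ a b c : ℚ, (a : ℝ) + (b : ℝ) * x 0 + (c : ℝ) * x 1 = 0 →
      a = 0 ∧ b = 0 ∧ c = 0)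
    (δ : ℝ) (hδ : 3 / 4 < δ)
    (p : ℕ → Fin 2 → ℤ) (q : ℕ → ℕ)
    (hqpos : ∀ n, 0 < q n) (hqmono : ∀ n, q n < q (n + 1))
    (N₀ : ℕ)
    (happrox : ∀ n ≥ N₀, ∀ i,
      |(q n : ℝ) * x i - (p n i : ℝ)| < (q (n + 1) : ℝ) ^ (-δ)) :
    (∀ N : ℕ, ∃ n ≥ N, ∀ i,
      |(q n : ℝ) * x i - (p n i : ℝ)| < (q n : ℝ) ^ (-((δ ^ 2 - δ / 2) / (1 - δ)))) ∧
    (∀ T : ℝ, ∃ Q : ℝ, Q > T ∧ ∃ (P : Fin 2 → ℤ) (b : ℤ), b ≠ 0 ∧ |(b : ℝ)| ≤ Q ∧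
      ∀ i, |(b : ℝ) * x i - (P i : ℝ)| < Q ^ (-((δ ^ 2 - δ / 2) / (1 - δ)))) := by
  classical
  have hδ0 : (0:ℝ) < δ := by linarith
  have hQpos : ∀ n, (0:ℝ) < (q n : ℝ) := fun n => by exact_mod_cast hqpos n
  have hQ1 : ∀ n, (1:ℝ) ≤ (q n : ℝ) := fun n => by exact_mod_cast hqpos n
  have hqle : ∀ {a b : ℕ}, a ≤ b → q a ≤ q b := by
    intro a b hab
    exact (monotone_nat_of_le_succ (fun n => (hqmono n).le)) hab
  have hQle : ∀ {a b : ℕ}, a ≤ b → (q a : ℝ) ≤ (q b : ℝ) := by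
    intro a b hab; exact_mod_cast hqle hab
  have hQnat : ∀ n : ℕ, (n:ℝ) + 1 ≤ (q n : ℝ) := by
    intro n
    induction n with
    | zero => simpa using hQ1 0
    | succ k ih =>
      have h1 : q k + 1 ≤ q (k+1) := hqmono k
      have h2 : ((q k : ℝ)) + 1 ≤ (q (k+1) : ℝ) := by exact_mod_cast h1
      push_cast
      linarith
  have key : ∀ N : ℕ, ∃ n ≥ N, ∀ i,
      |(q n : ℝ) * x i - (p n i : ℝ)| < (q n : ℝ) ^ (-((δ ^ 2 - δ / 2) / (1 - δ))) := by
    by_cases hδ1 : 1 ≤ δ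
    · -- easy degenerate case : exponent is ≤ 0
      intro N
      refine ⟨max N N₀, le_max_left _ _, ?_⟩
      intro i
      have h1 := happrox (max N N₀) (le_max_right _ _) i
      have hq2 : (1:ℝ) < (q (max N N₀ + 1) : ℝ) := by
        have h9 : 1 < q (max N N₀ + 1) := lt_of_le_of_lt (hqpos _) (hqmono _)
        exact_mod_cast h9
      have h2 : (q (max N N₀ + 1) : ℝ) ^ (-δ) < 1 :=
        Real.rpow_lt_one_of_one_lt_of_neg hq2 (by linarith)
      have hexp : 0 ≤ -((δ ^ 2 - δ / 2) / (1 - δ)) := by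
        rcases eq_or_lt_of_le hδ1 with h | h
        · rw [← h]; norm_num
        · have hnum : 0 < δ^2 - δ/2 := by nlinarith
          have hden : 1 - δ < 0 := by linarith
          have := div_neg_of_pos_of_neg hnum hden
          linarith
      have h3 : (1:ℝ) ≤ (q (max N N₀) : ℝ) ^ (-((δ ^ 2 - δ / 2) / (1 - δ))) := by
        calc (1:ℝ) = (1:ℝ) ^ (-((δ ^ 2 - δ / 2) / (1 - δ))) := (Real.one_rpow _).symm
          _ ≤ _ := Real.rpow_le_rpow (by norm_num) (hQ1 _) hexp
      linarith
    · -- main case 3/4 < δ < 1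
      push_neg at hδ1
      by_contra hcon
      push_neg at hcon
      obtain ⟨N, hN⟩ := hcon
      have h1δ : (0:ℝ) < 1 - δ := by linarith
      set γ : ℝ := (δ ^ 2 - δ / 2) / (1 - δ) with hγdef
      have hγpos : 0 < γ := div_pos (by nlinarith) h1δ
      set M : ℕ := max (max N N₀) 36 with hMdef
      have hMN : N ≤ M := le_trans (le_max_left _ _) (le_max_left _ _)
      have hMN₀ : N₀ ≤ M := le_trans (le_max_right _ _) (le_max_left _ _)
      have hM36 : 36 ≤ M := le_max_right _ _
      -- pointwise transfer of error along parallel vectors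
      have transfer : ∀ (a b : ℕ) (i : Fin 2), a ≤ b →
          (p a i * (q b : ℤ) = p b i * (q a : ℤ)) →
          |(q a : ℝ) * x i - (p a i : ℝ)| ≤ |(q b : ℝ) * x i - (p b i : ℝ)| := by
        intro a b i hab hpar
        have h2 : (p a i : ℝ) * (q b : ℝ) = (p b i : ℝ) * (q a : ℝ) := by exact_mod_cast hpar
        have h1 : ((q a : ℝ) * x i - p a i) * (q b : ℝ)
            = (q a : ℝ) * ((q b : ℝ) * x i - p b i) := by linear_combination -h2
        have h3 : |(q a : ℝ) * x i - p a i| * (q b : ℝ)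
            = (q a : ℝ) * |(q b : ℝ) * x i - p b i| := by
          have h3' := congrArg abs h1
          rw [abs_mul, abs_mul, abs_of_nonneg (hQpos b).le,
            abs_of_nonneg (hQpos a).le] at h3'
          exact h3'
        have h4 : (q a : ℝ) * |(q b : ℝ) * x i - p b i|
            ≤ (q b : ℝ) * |(q b : ℝ) * x i - p b i| :=
          mul_le_mul_of_nonneg_right (hQle hab) (abs_nonneg _)
        have h5 := h3.le.trans h4
        exact le_of_mul_le_mul_right (by linarith [h5]) (hQpos b)
      -- the key determinant-vanishing lemma
      have detzero : ∀ n m : ℕ, M ≤ n → n + 1 ≤ m →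
          (p (n+1) 0 * (q m : ℤ) = p m 0 * (q (n+1) : ℤ) ∧
           p (n+1) 1 * (q m : ℤ) = p m 1 * (q (n+1) : ℤ)) →
          det3 p q n m = 0 := by
        intro n m hn hm hpar
        have hparall : ∀ i : Fin 2, p (n+1) i * (q m : ℤ) = p m i * (q (n+1) : ℤ) := by
          intro i
          rcases (show i = 0 ∨ i = 1 by omega) with rfl | rfl
          exacts [hpar.1, hpar.2]
        have hb1 : ∀ i, |(q n : ℝ) * x i - p n i| < (q (n+1) : ℝ) ^ (-δ) :=
          happrox n (le_trans hMN₀ hn)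
        have hbm : ∀ i, |(q m : ℝ) * x i - p m i| < (q (m+1) : ℝ) ^ (-δ) :=
          happrox m (by omega)
        have hb2 : ∀ i, |(q (n+1) : ℝ) * x i - p (n+1) i| < (q (m+1) : ℝ) ^ (-δ) :=
          fun i => lt_of_le_of_lt (transfer (n+1) m i hm (hparall i)) (hbm i)
        have hb3 : ∀ i, |(q (m+1) : ℝ) * x i - p (m+1) i| < (q (m+1) : ℝ) ^ (-δ) := by
          intro i
          have h1 := happrox (m+1) (by omega) i
          have h2 : (q (m+2) : ℝ) ^ (-δ) ≤ (q (m+1) : ℝ) ^ (-δ) :=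
            Real.rpow_le_rpow_of_nonpos (hQpos (m+1)) (hQle (by omega)) (by linarith)
          exact lt_of_lt_of_le h1 h2
        -- growth bound q(m+1)^δ < q(n+1)^γ
        obtain ⟨j, hj⟩ := hN (n+1) (by omega)
        have hparj : p (n+1) j * (q m : ℤ) = p m j * (q (n+1) : ℤ) := hparall j
        have hj2 : (q (n+1) : ℝ) ^ (-γ) < (q (m+1) : ℝ) ^ (-δ) :=
          lt_of_le_of_lt (hj.trans (transfer (n+1) m j hm hparj)) (hbm j)
        have hb4 : (q (m+1) : ℝ) ^ δ < (q (n+1) : ℝ) ^ γ := by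
          rw [Real.rpow_neg (hQpos _).le, Real.rpow_neg (hQpos _).le] at hj2
          exact (inv_lt_inv₀ (Real.rpow_pos_of_pos (hQpos _) _)
            (Real.rpow_pos_of_pos (hQpos _) _)).mp hj2
        have hb5 : (q (m+1) : ℝ) ^ (1-δ) ≤ (q (n+1) : ℝ) ^ (δ - 1/2) := by
          have hs : 0 ≤ (1-δ)/δ := div_nonneg h1δ.le hδ0.le
          have h := Real.rpow_le_rpow (Real.rpow_nonneg (hQpos (m+1)).le _) hb4.le hs
          rw [← Real.rpow_mul (hQpos (m+1)).le, ← Real.rpow_mul (hQpos (n+1)).le] at h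
          have e1 : δ * ((1-δ)/δ) = 1 - δ := by field_simp
          have e2 : γ * ((1-δ)/δ) = δ - 1/2 := by rw [hγdef]; field_simp
          rwa [e1, e2] at h
        -- the determinant identity over ℝ
        set X : ℝ := ((q (n+1):ℝ)*x 0 - p (n+1) 0) * ((q (m+1):ℝ)*x 1 - p (m+1) 1)
            - ((q (n+1):ℝ)*x 1 - p (n+1) 1) * ((q (m+1):ℝ)*x 0 - p (m+1) 0) with hXdef
        set Y : ℝ := ((q n:ℝ)*x 0 - p n 0) * ((q (m+1):ℝ)*x 1 - p (m+1) 1)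
            - ((q n:ℝ)*x 1 - p n 1) * ((q (m+1):ℝ)*x 0 - p (m+1) 0) with hYdef
        set Z : ℝ := ((q n:ℝ)*x 0 - p n 0) * ((q (n+1):ℝ)*x 1 - p (n+1) 1)
            - ((q n:ℝ)*x 1 - p n 1) * ((q (n+1):ℝ)*x 0 - p (n+1) 0) with hZdef
        have hid : (det3 p q n m : ℝ) = (q n:ℝ) * X - (q (n+1):ℝ) * Y + (q (m+1):ℝ) * Z := by
          rw [hXdef, hYdef, hZdef]
          simp only [det3]
          push_cast
          ring
        set η₁ : ℝ := (q (n+1) : ℝ) ^ (-δ) with hη₁def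
        set η₂ : ℝ := (q (m+1) : ℝ) ^ (-δ) with hη₂def
        have hη₁pos : 0 < η₁ := Real.rpow_pos_of_pos (hQpos _) _
        have hη₂pos : 0 < η₂ := Real.rpow_pos_of_pos (hQpos _) _
        have hη12 : η₂ ≤ η₁ :=
          Real.rpow_le_rpow_of_nonpos (hQpos (n+1)) (hQle (by omega)) (by linarith)
        have habs2 : ∀ a b c d bd1 bd2 : ℝ, 0 ≤ bd1 → 0 ≤ bd2 →
            |a| ≤ bd1 → |b| ≤ bd2 → |c| ≤ bd1 → |d| ≤ bd2 →
            |a*b - c*d| ≤ 2*(bd1*bd2) := by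
          intro a b c d bd1 bd2 hbd1 hbd2 h1 h2 h3 h4
          have h5 : |a*b| ≤ bd1*bd2 := by
            rw [abs_mul]; exact mul_le_mul h1 h2 (abs_nonneg _) hbd1
          have h6 : |c*d| ≤ bd1*bd2 := by
            rw [abs_mul]; exact mul_le_mul h3 h4 (abs_nonneg _) hbd1
          calc |a*b - c*d| ≤ |a*b| + |c*d| := abs_sub _ _
            _ ≤ 2*(bd1*bd2) := by linarith
        have hX : |X| ≤ 2*(η₁*η₂) := by
          rw [hXdef]
          exact habs2 _ _ _ _ η₁ η₂ hη₁pos.le hη₂pos.le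
            ((hb2 0).le.trans hη12) (hb3 1).le ((hb2 1).le.trans hη12) (hb3 0).le
        have hY : |Y| ≤ 2*(η₁*η₂) := by
          rw [hYdef]
          exact habs2 _ _ _ _ η₁ η₂ hη₁pos.le hη₂pos.le
            (hb1 0).le (hb3 1).le (hb1 1).le (hb3 0).le
        have hZ : |Z| ≤ 2*(η₁*η₂) := by
          rw [hZdef]
          exact habs2 _ _ _ _ η₁ η₂ hη₁pos.le hη₂pos.le
            (hb1 0).le (hb2 1).le (hb1 1).le (hb2 0).le
        have c1 : |(q n:ℝ) * X| ≤ (q (m+1):ℝ) * (2*(η₁*η₂)) := by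
          rw [abs_mul, abs_of_nonneg (hQpos n).le]
          exact mul_le_mul (hQle (by omega)) hX (abs_nonneg _) (hQpos _).le
        have c2 : |(q (n+1):ℝ) * Y| ≤ (q (m+1):ℝ) * (2*(η₁*η₂)) := by
          rw [abs_mul, abs_of_nonneg (hQpos (n+1)).le]
          exact mul_le_mul (hQle (by omega)) hY (abs_nonneg _) (hQpos _).le
        have c3 : |(q (m+1):ℝ) * Z| ≤ (q (m+1):ℝ) * (2*(η₁*η₂)) := by
          rw [abs_mul, abs_of_nonneg (hQpos (m+1)).le]
          exact mul_le_mul le_rfl hZ (abs_nonneg _) (hQpos _).le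
        have habs : |(det3 p q n m : ℝ)| ≤ 6 * ((q (m+1):ℝ) * (η₁ * η₂)) := by
          have h7 : |(det3 p q n m : ℝ)|
              ≤ |(q n:ℝ) * X| + |(q (n+1):ℝ) * Y| + |(q (m+1):ℝ) * Z| := by
            rw [hid, sub_eq_add_neg]
            simpa [abs_neg] using abs_add_three ((q n:ℝ) * X) (-((q (n+1):ℝ) * Y)) ((q (m+1):ℝ) * Z)
          linarith
        -- numeric finish
        have hq36 : (36:ℝ) < (q (n+1) : ℝ) := by
          have h1 := hQnat (n+1)
          have h2 : (36:ℝ) ≤ (n:ℝ) := by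
            have : (36:ℕ) ≤ n := le_trans hM36 hn
            exact_mod_cast this
          push_cast at h1
          linarith
        have hfinal : 6 * ((q (m+1):ℝ) * (η₁ * η₂)) < 1 := by
          have h1 : (q (m+1):ℝ) * η₂ = (q (m+1):ℝ) ^ (1-δ) := by
            rw [hη₂def, sub_eq_add_neg, Real.rpow_add (hQpos (m+1)), Real.rpow_one]
          have h2 : (q (n+1):ℝ) ^ (δ-1/2) * η₁ = (q (n+1):ℝ) ^ (-(1/2:ℝ)) := by
            rw [hη₁def, ← Real.rpow_add (hQpos (n+1))]
            congr 1
            ring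
          have h3 : 6 * ((q (m+1):ℝ) ^ (1-δ)) * η₁ ≤ 6 * ((q (n+1):ℝ) ^ (δ-1/2)) * η₁ := by
            have := hη₁pos.le
            nlinarith [hb5]
          have h4 : 6 * (q (n+1):ℝ) ^ (-(1/2:ℝ)) < 1 := by
            have hh : (q (n+1):ℝ) ^ ((1/2:ℝ)) * (q (n+1):ℝ) ^ ((1/2:ℝ)) = (q (n+1):ℝ) := by
              rw [← Real.rpow_add (hQpos (n+1))]
              norm_num
            have hpos2 : 0 < (q (n+1):ℝ) ^ ((1/2:ℝ)) := Real.rpow_pos_of_pos (hQpos _) _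
            have h6 : 6 < (q (n+1):ℝ) ^ ((1/2:ℝ)) := by nlinarith
            have h7 : (q (n+1):ℝ) ^ (-(1/2:ℝ)) = ((q (n+1):ℝ) ^ ((1/2:ℝ)))⁻¹ := by
              rw [← Real.rpow_neg (hQpos (n+1)).le]
            rw [h7, ← div_eq_mul_inv]
            exact (div_lt_one hpos2).mpr h6
          calc 6 * ((q (m+1):ℝ) * (η₁ * η₂)) = 6 * ((q (m+1):ℝ) * η₂) * η₁ := by ring
            _ = 6 * ((q (m+1):ℝ) ^ (1-δ)) * η₁ := by rw [h1]
            _ ≤ 6 * ((q (n+1):ℝ) ^ (δ-1/2)) * η₁ := h3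
            _ = 6 * ((q (n+1):ℝ) ^ (δ-1/2) * η₁) := by ring
            _ = 6 * (q (n+1):ℝ) ^ (-(1/2:ℝ)) := by rw [h2]
            _ < 1 := h4
        have hlt1 : |(det3 p q n m : ℝ)| < 1 := lt_of_le_of_lt habs hfinal
        have hlt2 : |det3 p q n m| < 1 := by exact_mod_cast hlt1
        rcases abs_lt.mp hlt2 with ⟨ha, hb⟩
        omega
      -- "chain" : consecutive nonzero w's are parallel
      have chain : ∀ n m : ℕ, M ≤ n → n < m →
          (∀ k, n < k → k < m → wA p q k = 0 ∧ wB p q k = 0 ∧ wC p q k = 0) →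
          (wA p q n * wB p q m = wB p q n * wA p q m ∧
           wA p q n * wC p q m = wC p q n * wA p q m ∧
           wB p q n * wC p q m = wC p q n * wB p q m) := by
        intro n m hn hm hz
        have hqk : ∀ k : ℕ, ((q k : ℤ)) ≠ 0 :=
          fun k => Int.natCast_ne_zero.mpr (hqpos k).ne'
        have hparchain : ∀ k, n+1 ≤ k → k ≤ m →
            (p (n+1) 0 * (q k : ℤ) = p k 0 * (q (n+1) : ℤ) ∧
             p (n+1) 1 * (q k : ℤ) = p k 1 * (q (n+1) : ℤ)) := by
          intro k hk
          induction k, hk using Nat.le_induction with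
          | base => exact fun _ => ⟨rfl, rfl⟩
          | succ k hk IH =>
            intro hk1
            have hzk := hz k (by omega) (by omega)
            have hp0 : p k 0 * (q (k+1) : ℤ) = p (k+1) 0 * (q k : ℤ) := by
              have := hzk.2.2
              simp only [wC] at this
              linarith [this]
            have hp1 : p k 1 * (q (k+1) : ℤ) = p (k+1) 1 * (q k : ℤ) := by
              have := hzk.2.1
              simp only [wB] at this
              linarith [this]
            have h1 := IH (by omega)
            constructor
            · apply mul_right_cancel₀ (hqk k)
              linear_combination (q (k+1) : ℤ) * h1.1 + (q (n+1) : ℤ) * hp0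
            · apply mul_right_cancel₀ (hqk k)
              linear_combination (q (k+1) : ℤ) * h1.2 + (q (n+1) : ℤ) * hp1
        have hpar := hparchain m (by omega) le_rfl
        have hD := detzero n m hn (by omega) hpar
        obtain ⟨hp0, hp1⟩ := hpar
        -- components of w' = v_{n+1} × v_{m+1}
        set A' : ℤ := p (n+1) 0 * p (m+1) 1 - p (n+1) 1 * p (m+1) 0 with hA'def
        set B' : ℤ := p (n+1) 1 * (q (m+1) : ℤ) - (q (n+1) : ℤ) * p (m+1) 1 with hB'def
        set C' : ℤ := (q (n+1) : ℤ) * p (m+1) 0 - p (n+1) 0 * (q (m+1) : ℤ) with hC'def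
        have hA' : (q (n+1):ℤ) * wA p q m = (q m : ℤ) * A' := by
          simp only [wA, hA'def]
          linear_combination -(p (m+1) 1) * hp0 + (p (m+1) 0) * hp1
        have hB' : (q (n+1):ℤ) * wB p q m = (q m : ℤ) * B' := by
          simp only [wB, hB'def]
          linear_combination -(q (m+1) : ℤ) * hp1
        have hC' : (q (n+1):ℤ) * wC p q m = (q m : ℤ) * C' := by
          simp only [wC, hC'def]
          linear_combination (q (m+1) : ℤ) * hp0
        have i1 : wB p q n * C' - wC p q n * B' = det3 p q n m * (q (n+1) : ℤ) := by
          simp only [wB, wC, hB'def, hC'def, det3]; ring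
        have i2 : wC p q n * A' - wA p q n * C' = det3 p q n m * p (n+1) 0 := by
          simp only [wA, wC, hA'def, hC'def, det3]; ring
        have i3 : wA p q n * B' - wB p q n * A' = det3 p q n m * p (n+1) 1 := by
          simp only [wA, wB, hA'def, hB'def, det3]; ring
        refine ⟨?_, ?_, ?_⟩
        · apply mul_left_cancel₀ (hqk (n+1))
          linear_combination (wA p q n) * hB' - (wB p q n) * hA'
            + (q m : ℤ) * i3 + ((q m : ℤ) * p (n+1) 1) * hD
        · apply mul_left_cancel₀ (hqk (n+1))
          linear_combination (wA p q n) * hC' - (wC p q n) * hA'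
            - (q m : ℤ) * i2 - ((q m : ℤ) * p (n+1) 0) * hD
        · apply mul_left_cancel₀ (hqk (n+1))
          linear_combination (wB p q n) * hC' - (wC p q n) * hB'
            + (q m : ℤ) * i1 + ((q m : ℤ) * (q (n+1) : ℤ)) * hD
      -- dichotomy
      by_cases hone : ∃ K, ∀ n ≥ K, wA p q n = 0 ∧ wB p q n = 0 ∧ wC p q n = 0
      · -- degenerate case: x 0 rational
        obtain ⟨K, hK⟩ := hone
        set K₁ : ℕ := max K M with hK₁def
        have hparall : ∀ n, K₁ ≤ n →
            (p K₁ 0 * (q n : ℤ) = p n 0 * (q K₁ : ℤ) ∧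
             p K₁ 1 * (q n : ℤ) = p n 1 * (q K₁ : ℤ)) := by
          intro n hn
          induction n, hn using Nat.le_induction with
          | base => exact ⟨rfl, rfl⟩
          | succ k hk IH =>
            have hzk := hK k (le_trans (le_max_left _ _) hk)
            have hp0 : p k 0 * (q (k+1) : ℤ) = p (k+1) 0 * (q k : ℤ) := by
              have := hzk.2.2; simp only [wC] at this; linarith [this]
            have hp1 : p k 1 * (q (k+1) : ℤ) = p (k+1) 1 * (q k : ℤ) := by
              have := hzk.2.1; simp only [wB] at this; linarith [this]
            have hqk : ((q k : ℤ)) ≠ 0 := Int.natCast_ne_zero.mpr (hqpos k).ne'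
            constructor
            · apply mul_right_cancel₀ hqk
              linear_combination (q (k+1) : ℤ) * IH.1 + (q K₁ : ℤ) * hp0
            · apply mul_right_cancel₀ hqk
              linear_combination (q (k+1) : ℤ) * IH.2 + (q K₁ : ℤ) * hp1
        have hx0 : (q K₁ : ℝ) * x 0 - (p K₁ 0 : ℝ) = 0 := by
          by_contra habs0
          have hpos : 0 < |(q K₁ : ℝ) * x 0 - p K₁ 0| := abs_pos.mpr habs0
          obtain ⟨n, hn⟩ := exists_nat_gt ((q K₁ : ℝ) / |(q K₁ : ℝ) * x 0 - p K₁ 0|)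
          set n' : ℕ := max n K₁ with hn'def
          have h1 : |(q K₁ : ℝ) * x 0 - p K₁ 0| * (q n' : ℝ)
              = (q K₁ : ℝ) * |(q n' : ℝ) * x 0 - p n' 0| := by
            have hpar := (hparall n' (le_max_right _ _)).1
            have h2 : (p K₁ 0 : ℝ) * (q n' : ℝ) = (p n' 0 : ℝ) * (q K₁ : ℝ) := by
              exact_mod_cast hpar
            have h1' : ((q K₁ : ℝ) * x 0 - p K₁ 0) * (q n' : ℝ)
                = (q K₁ : ℝ) * ((q n' : ℝ) * x 0 - p n' 0) := by linear_combination -h2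
            have h1'' := congrArg abs h1'
            rw [abs_mul, abs_mul, abs_of_nonneg (hQpos n').le,
              abs_of_nonneg (hQpos K₁).le] at h1''
            exact h1''
          have h2 : |(q n' : ℝ) * x 0 - p n' 0| < 1 := by
            have h3 := happrox n' (le_trans hMN₀ (le_trans (le_max_right K M) (le_max_right n K₁))) 0
            have h4 : (q (n'+1) : ℝ) ^ (-δ) ≤ 1 :=
              Real.rpow_le_one_of_one_le_of_nonpos (hQ1 _) (by linarith)
            linarith
          have h5 : |(q K₁ : ℝ) * x 0 - p K₁ 0| * (q n' : ℝ) < (q K₁ : ℝ) := by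
            calc |(q K₁ : ℝ) * x 0 - p K₁ 0| * (q n' : ℝ)
                = (q K₁ : ℝ) * |(q n' : ℝ) * x 0 - p n' 0| := h1
              _ < (q K₁ : ℝ) * 1 := by
                  exact mul_lt_mul_of_pos_left h2 (hQpos K₁)
              _ = (q K₁ : ℝ) := mul_one _
          have h6 : (q K₁ : ℝ) < (n:ℝ) * |(q K₁ : ℝ) * x 0 - p K₁ 0| := by
            rw [div_lt_iff₀ hpos] at hn
            linarith
          have h7 : (n : ℝ) ≤ (q n' : ℝ) := by
            have := hQnat n'
            have h8 : (n:ℝ) ≤ (n':ℝ) := by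
              have : n ≤ n' := le_max_left _ _
              exact_mod_cast this
            linarith
          nlinarith
        -- conclude contradiction with hirr
        have hqK₁ : ((q K₁ : ℚ)) ≠ 0 := Nat.cast_ne_zero.mpr (hqpos K₁).ne'
        have := hirr (-(p K₁ 0 : ℚ) / (q K₁ : ℚ)) 1 0 (by
          push_cast
          have hq : ((q K₁ : ℝ)) ≠ 0 := ne_of_gt (hQpos K₁)
          field_simp
          linarith [hx0])
        exact one_ne_zero this.2.1
      · -- main case : infinitely many nonzero w's, all parallel
        push_neg at hone
        have hone' : ∀ K : ℕ, ∃ n, K ≤ n ∧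
            ¬ (wA p q n = 0 ∧ wB p q n = 0 ∧ wC p q n = 0) := by
          intro K
          obtain ⟨n, hn1, hn2⟩ := hone K
          exact ⟨n, hn1, by tauto⟩
        obtain ⟨n₀, hn₀M, hn₀z⟩ := hone' M
        have hProp : ∀ m, n₀ ≤ m → ¬ (wA p q m = 0 ∧ wB p q m = 0 ∧ wC p q m = 0) →
            (wA p q n₀ * wB p q m = wB p q n₀ * wA p q m ∧
             wA p q n₀ * wC p q m = wC p q n₀ * wA p q m ∧
             wB p q n₀ * wC p q m = wC p q n₀ * wB p q m) := by
          intro m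
          induction m using Nat.strong_induction_on with
          | _ m IH =>
            intro hm hmz
            rcases eq_or_lt_of_le hm with rfl | hlt
            · exact ⟨mul_comm _ _, mul_comm _ _, mul_comm _ _⟩
            · set Pk : ℕ → Prop :=
                fun k => n₀ ≤ k ∧ ¬ (wA p q k = 0 ∧ wB p q k = 0 ∧ wC p q k = 0) with hPkdef
              have hwit : Pk n₀ := ⟨le_refl _, hn₀z⟩
              have hle' : n₀ ≤ m - 1 := by omega
              set n1 : ℕ := Nat.findGreatest Pk (m-1) with hn1def
              have hP : Pk n1 := Nat.findGreatest_spec hle' hwit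
              have hge : n₀ ≤ n1 := le_trans le_rfl (Nat.le_findGreatest hle' hwit)
              have hlt2 : n1 < m := by
                have := Nat.findGreatest_le (P := Pk) (m-1)
                omega
              have hz : ∀ k, n1 < k → k < m →
                  wA p q k = 0 ∧ wB p q k = 0 ∧ wC p q k = 0 := by
                intro k h1 h2
                by_contra hk
                exact (Nat.findGreatest_is_greatest (by omega : n1 < k) (by omega)) ⟨by omega, hk⟩
              have hchain := chain n1 m (le_trans hn₀M hge) hlt2 hz
              have hIH := IH n1 hlt2 hge hP.2
              have hvnz : wA p q n1 ≠ 0 ∨ wB p q n1 ≠ 0 ∨ wC p q n1 ≠ 0 := by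
                by_contra h
                push_neg at h
                exact hP.2 ⟨h.1, h.2.1, h.2.2⟩
              exact cross_trans _ _ _ _ _ _ _ _ _
                hIH.1 hIH.2.1 hIH.2.2 hchain.1 hchain.2.1 hchain.2.2 hvnz
        -- the limit parameter
        set L : ℝ := (wA p q n₀ : ℝ) + (wB p q n₀ : ℝ) * x 0 + (wC p q n₀ : ℝ) * x 1 with hLdef
        set c : ℝ := 2 * (|(wA p q n₀ : ℝ)| + |(wB p q n₀ : ℝ)| + |(wC p q n₀ : ℝ)|) with hcdef
        have hc0 : 0 ≤ c := by
          rw [hcdef]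
          positivity
        have hb : ∀ K : ℕ, ∃ m, K ≤ m ∧ |L| ≤ c * (q (m+1) : ℝ) ^ (-δ) := by
          intro K
          obtain ⟨m, hm1, hm2⟩ := hone' (max K n₀)
          refine ⟨m, le_trans (le_max_left _ _) hm1, ?_⟩
          have hmn₀ : n₀ ≤ m := le_trans (le_max_right _ _) hm1
          have hcross := hProp m hmn₀ hm2
          -- ρ m bound
          set ρ : ℝ := (wA p q m : ℝ) + (wB p q m : ℝ) * x 0 + (wC p q m : ℝ) * x 1 with hρdef
          have hρ : ρ = ((q m:ℝ)*x 0 - p m 0) * ((q (m+1):ℝ)*x 1 - p (m+1) 1)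
              - ((q m:ℝ)*x 1 - p m 1) * ((q (m+1):ℝ)*x 0 - p (m+1) 0) := by
            rw [hρdef]
            simp only [wA, wB, wC]
            push_cast
            ring
          have hmN₀ : N₀ ≤ m := le_trans hMN₀ (le_trans hn₀M hmn₀)
          have hbm : ∀ i, |(q m : ℝ) * x i - p m i| < (q (m+1) : ℝ) ^ (-δ) :=
            happrox m hmN₀
          have hbm1 : ∀ i, |(q (m+1) : ℝ) * x i - p (m+1) i| < 1 := by
            intro i
            have h1 := happrox (m+1) (by omega) i
            have h2 : (q (m+2) : ℝ) ^ (-δ) ≤ 1 :=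
              Real.rpow_le_one_of_one_le_of_nonpos (hQ1 _) (by linarith)
            linarith
          have hρb : |ρ| ≤ 2 * ((q (m+1) : ℝ) ^ (-δ)) := by
            rw [hρ]
            have h1 : |((q m:ℝ)*x 0 - p m 0) * ((q (m+1):ℝ)*x 1 - p (m+1) 1)|
                ≤ ((q (m+1) : ℝ) ^ (-δ)) * 1 := by
              rw [abs_mul]
              exact mul_le_mul (hbm 0).le (hbm1 1).le (abs_nonneg _)
                (Real.rpow_pos_of_pos (hQpos _) _).le
            have h2 : |((q m:ℝ)*x 1 - p m 1) * ((q (m+1):ℝ)*x 0 - p (m+1) 0)|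
                ≤ ((q (m+1) : ℝ) ^ (-δ)) * 1 := by
              rw [abs_mul]
              exact mul_le_mul (hbm 1).le (hbm1 0).le (abs_nonneg _)
                (Real.rpow_pos_of_pos (hQpos _) _).le
            calc |_ - _| ≤ _ + _ := abs_sub _ _
              _ ≤ 2 * ((q (m+1) : ℝ) ^ (-δ)) := by linarith
          -- the three proportionality relations
          have e1 : (wA p q n₀ : ℝ) * (wB p q m : ℝ) = (wB p q n₀ : ℝ) * (wA p q m : ℝ) := by
            exact_mod_cast congrArg (Int.cast : ℤ → ℝ) hcross.1
          have e2 : (wA p q n₀ : ℝ) * (wC p q m : ℝ) = (wC p q n₀ : ℝ) * (wA p q m : ℝ) := by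
            exact_mod_cast congrArg (Int.cast : ℤ → ℝ) hcross.2.1
          have e3 : (wB p q n₀ : ℝ) * (wC p q m : ℝ) = (wC p q n₀ : ℝ) * (wB p q m : ℝ) := by
            exact_mod_cast congrArg (Int.cast : ℤ → ℝ) hcross.2.2
          have rA : (wA p q m : ℝ) * L = (wA p q n₀ : ℝ) * ρ := by
            rw [hLdef, hρdef]
            linear_combination (-(x 0)) * e1 + (-(x 1)) * e2
          have rB : (wB p q m : ℝ) * L = (wB p q n₀ : ℝ) * ρ := by
            rw [hLdef, hρdef]
            linear_combination e1 - x 1 * e3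
          have rC : (wC p q m : ℝ) * L = (wC p q n₀ : ℝ) * ρ := by
            rw [hLdef, hρdef]
            linear_combination e2 + x 0 * e3
          -- sum of absolute values
          have sA : |(wA p q m : ℝ)| * |L| = |(wA p q n₀ : ℝ)| * |ρ| := by
            rw [← abs_mul, ← abs_mul, rA]
          have sB : |(wB p q m : ℝ)| * |L| = |(wB p q n₀ : ℝ)| * |ρ| := by
            rw [← abs_mul, ← abs_mul, rB]
          have sC : |(wC p q m : ℝ)| * |L| = |(wC p q n₀ : ℝ)| * |ρ| := by
            rw [← abs_mul, ← abs_mul, rC]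
          have hsum1 : (1:ℝ) ≤ |(wA p q m : ℝ)| + |(wB p q m : ℝ)| + |(wC p q m : ℝ)| := by
            have h1 : (1:ℤ) ≤ |wA p q m| + |wB p q m| + |wC p q m| := by
              by_contra h
              push_neg at h
              have ha := abs_nonneg (wA p q m)
              have hb' := abs_nonneg (wB p q m)
              have hc' := abs_nonneg (wC p q m)
              apply hm2
              constructor
              · have : |wA p q m| = 0 := by omega
                exact abs_eq_zero.mp this
              constructor
              · have : |wB p q m| = 0 := by omega
                exact abs_eq_zero.mp this
              · have : |wC p q m| = 0 := by omega
                exact abs_eq_zero.mp this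
            exact_mod_cast h1
          have hsumeq : (|(wA p q m : ℝ)| + |(wB p q m : ℝ)| + |(wC p q m : ℝ)|) * |L|
              = (|(wA p q n₀ : ℝ)| + |(wB p q n₀ : ℝ)| + |(wC p q n₀ : ℝ)|) * |ρ| := by
            linear_combination sA + sB + sC
          have t0 : |L| ≤ (|(wA p q m : ℝ)| + |(wB p q m : ℝ)| + |(wC p q m : ℝ)|) * |L| := by
            nlinarith [abs_nonneg L]
          have t2 : (|(wA p q n₀ : ℝ)| + |(wB p q n₀ : ℝ)| + |(wC p q n₀ : ℝ)|) * |ρ|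
              ≤ (|(wA p q n₀ : ℝ)| + |(wB p q n₀ : ℝ)| + |(wC p q n₀ : ℝ)|) * (2 * ((q (m+1) : ℝ) ^ (-δ))) :=
            mul_le_mul_of_nonneg_left hρb (by positivity)
          have t3 : c * (q (m+1) : ℝ) ^ (-δ)
              = (|(wA p q n₀ : ℝ)| + |(wB p q n₀ : ℝ)| + |(wC p q n₀ : ℝ)|) * (2 * ((q (m+1) : ℝ) ^ (-δ))) := by
            rw [hcdef]; ring
          linarith
        -- conclude L = 0
        have hsq : ∀ ε : ℝ, 0 < ε → L^2 < ε := by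
          intro ε hε
          obtain ⟨m, hm, hle⟩ := hb ⌈c^2/ε⌉₊
          have hQm : ((m:ℝ)+2) ≤ (q (m+1) : ℝ) := by
            have := hQnat (m+1); push_cast at this; linarith
          have hposQ := hQpos (m+1)
          have h2 : ((q (m+1):ℝ)^(-δ))^2 ≤ ((q (m+1):ℝ))⁻¹ := by
            have ha : ((q (m+1):ℝ)^(-δ))^2 = (q (m+1):ℝ)^(-δ + -δ) := by
              rw [Real.rpow_add hposQ]; ring
            rw [ha]
            calc (q (m+1):ℝ)^(-δ + -δ) ≤ (q (m+1):ℝ)^(-1:ℝ) :=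
                Real.rpow_le_rpow_of_exponent_le (hQ1 _) (by linarith)
              _ = ((q (m+1):ℝ))⁻¹ := Real.rpow_neg_one _
          have h3 : L^2 ≤ c^2 * ((q (m+1):ℝ))⁻¹ := by
            have h4 : |L|^2 ≤ (c * (q (m+1):ℝ)^(-δ))^2 :=
              pow_le_pow_left₀ (abs_nonneg L) hle 2
            rw [sq_abs] at h4
            have h5 : c^2 * (((q (m+1):ℝ))^(-δ))^2 ≤ c^2 * ((q (m+1):ℝ))⁻¹ :=
              mul_le_mul_of_nonneg_left h2 (sq_nonneg c)
            calc L^2 ≤ (c * (q (m+1):ℝ)^(-δ))^2 := h4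
              _ = c^2 * (((q (m+1):ℝ))^(-δ))^2 := by ring
              _ ≤ c^2 * ((q (m+1):ℝ))⁻¹ := h5
          have h6 : c^2 * ((q (m+1):ℝ))⁻¹ ≤ c^2 * (((m:ℝ)+2))⁻¹ := by
            have hinv : ((q (m+1):ℝ))⁻¹ ≤ (((m:ℝ)+2))⁻¹ :=
              inv_anti₀ (by positivity) hQm
            exact mul_le_mul_of_nonneg_left hinv (sq_nonneg c)
          have h7 : c^2 * (((m:ℝ)+2))⁻¹ < ε := by
            have hmceil : (c^2/ε : ℝ) ≤ (m:ℝ) := by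
              have h8 : ((⌈c^2/ε⌉₊:ℕ):ℝ) ≤ (m:ℝ) := by exact_mod_cast hm
              linarith [Nat.le_ceil (c^2/ε)]
            have hc2 : c^2 ≤ ε * (m:ℝ) := by
              rw [div_le_iff₀ hε] at hmceil; linarith
            have hmpos : (0:ℝ) < (m:ℝ)+2 := by positivity
            rw [← div_eq_mul_inv, div_lt_iff₀ hmpos]
            have hexp : ε * ((m:ℝ)+2) = ε*(m:ℝ) + 2*ε := by ring
            rw [hexp]
            linarith
          exact lt_of_le_of_lt (h3.trans h6) h7
        have hL2 : L^2 ≤ 0 := by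
          by_contra h
          push_neg at h
          exact absurd (hsq _ h) (lt_irrefl _)
        have hL0 : L = 0 := by
          have := le_antisymm hL2 (sq_nonneg L)
          exact (pow_eq_zero_iff two_ne_zero).mp this
        have hzero := hirr ((wA p q n₀ : ℤ) : ℚ) ((wB p q n₀ : ℤ) : ℚ) ((wC p q n₀ : ℤ) : ℚ) (by
          push_cast
          rw [hLdef] at hL0
          exact hL0)
        exact hn₀z ⟨by exact_mod_cast hzero.1, by exact_mod_cast hzero.2.1,
          by exact_mod_cast hzero.2.2⟩
  refine ⟨key, ?_⟩
  intro T
  obtain ⟨n, hn, hprop⟩ := key ⌈T⌉₊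
  refine ⟨(q n : ℝ), ?_, p n, (q n : ℤ), ?_, ?_, ?_⟩
  · have h1 : T ≤ (⌈T⌉₊ : ℝ) := Nat.le_ceil T
    have h2 : ((⌈T⌉₊:ℕ):ℝ) ≤ (n:ℝ) := by exact_mod_cast hn
    have := hQnat n
    linarith
  · exact_mod_cast (hqpos n).ne'
  · rw [show ((q n:ℤ):ℝ) = (q n:ℝ) by push_cast; ring, abs_of_nonneg (hQpos n).le]
  · intro i
    have hcast : ((q n:ℤ):ℝ) = (q n:ℝ) := by push_cast; ring
    rw [hcast]
    exact hprop i
end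

section
/- Let W be a set of weights with w_min > 0 and let x ∈ ℝ^d. Define τ := τ̂_W(x) = liminf_{t→∞} inf_{w∈W} (−1/t) log δ(a_{w,t} u_x ℤ^{d+1}), where δ(Λ) is the length of the shortest nonzero vector of Λ. Then the W-uniform exponent satisfies (τ + w_max)/((1 − τ) w_max) ≤ σ̂_W(x) ≤ (τ + w_min)/((1 − τ) w_min). -/
open Filter

/-- The vector `a_{w,t} u_x m` of the lattice `a_{w,t} u_x ℤ^{d+1}`. -/
noncomputable def latVec {d : ℕ} (w : Fin d → ℝ) (t : ℝ) (x : Fin d → ℝ)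
    (m : Fin (d + 1) → ℤ) : Fin (d + 1) → ℝ :=
  fun i => Fin.lastCases (motive := fun _ => ℝ)
    (Real.exp (-t) * (m (Fin.last d) : ℝ))
    (fun j : Fin d =>
      Real.exp (w j * t) * ((m (Fin.castSucc j) : ℝ) + (m (Fin.last d) : ℝ) * x j)) i

/-- `δ(a_{w,t} u_x ℤ^{d+1})`: the length (sup-norm) of a shortest nonzero vector of the
lattice `a_{w,t} u_x ℤ^{d+1}`. -/
noncomputable def latticeDelta (d : ℕ) (w : Fin d → ℝ) (t : ℝ) (x : Fin d → ℝ) : ℝ :=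
  sInf {r : ℝ | ∃ m : Fin (d + 1) → ℤ, m ≠ 0 ∧ r = ‖latVec w t x m‖}

namespace DaniAux

variable {d : ℕ}

lemma latVec_last (w : Fin d → ℝ) (t : ℝ) (x : Fin d → ℝ) (m : Fin (d+1) → ℤ) :
    latVec w t x m (Fin.last d) = Real.exp (-t) * (m (Fin.last d) : ℝ) := by
  simp [latVec]

lemma latVec_castSucc (w : Fin d → ℝ) (t : ℝ) (x : Fin d → ℝ) (m : Fin (d+1) → ℤ) (j : Fin d) :
    latVec w t x m (Fin.castSucc j)
      = Real.exp (w j * t) * ((m (Fin.castSucc j) : ℝ) + (m (Fin.last d) : ℝ) * x j) := by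
  simp [latVec]

lemma latVec_neg (w : Fin d → ℝ) (t : ℝ) (x : Fin d → ℝ) (m : Fin (d+1) → ℤ) :
    latVec w t x (-m) = -(latVec w t x m) := by
  funext i
  refine Fin.lastCases ?_ ?_ i
  · simp [latVec_last]
  · intro j
    simp only [latVec_castSucc, Pi.neg_apply, Int.cast_neg]
    ring

lemma deltaSet_nonempty (w : Fin d → ℝ) (t : ℝ) (x : Fin d → ℝ) :
    {r : ℝ | ∃ m : Fin (d + 1) → ℤ, m ≠ 0 ∧ r = ‖latVec w t x m‖}.Nonempty := by
  refine ⟨‖latVec w t x 1‖, 1, ?_, rfl⟩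
  intro h
  have := congrFun h (Fin.last d)
  simp at this

lemma deltaSet_bddBelow (w : Fin d → ℝ) (t : ℝ) (x : Fin d → ℝ) :
    BddBelow {r : ℝ | ∃ m : Fin (d + 1) → ℤ, m ≠ 0 ∧ r = ‖latVec w t x m‖} := by
  refine ⟨0, ?_⟩
  rintro r ⟨m, -, rfl⟩
  positivity

lemma exp_rpow' (a y : ℝ) : (Real.exp a) ^ y = Real.exp (a * y) := by
  rw [Real.rpow_def_of_pos (Real.exp_pos a), Real.log_exp]

lemma norm_latVec_of_last_eq_zero (w : Fin d → ℝ) {c : ℝ} (hwc : ∀ i, c ≤ w i) (hc : 0 ≤ c)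
    {t : ℝ} (ht : 0 ≤ t) (x : Fin d → ℝ) {m : Fin (d+1) → ℤ} (hm : m ≠ 0)
    (hq : m (Fin.last d) = 0) :
    Real.exp (c * t) ≤ ‖latVec w t x m‖ := by
  have : ∃ j : Fin d, m (Fin.castSucc j) ≠ 0 := by
    by_contra h
    push_neg at h
    apply hm
    funext i
    refine Fin.lastCases ?_ ?_ i
    · exact hq
    · exact h
  obtain ⟨j, hj⟩ := this
  have h2 := norm_le_pi_norm (latVec w t x m) (Fin.castSucc j)
  rw [latVec_castSucc, Real.norm_eq_abs, hq, Int.cast_zero] at h2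
  have h3 : (1:ℝ) ≤ |(m (Fin.castSucc j) : ℝ)| := by
    rw [← Int.cast_abs]
    exact_mod_cast Int.one_le_abs hj
  have h4 : Real.exp (c * t) ≤ Real.exp (w j * t) := by
    apply Real.exp_le_exp.mpr
    exact mul_le_mul_of_nonneg_right (hwc j) ht
  calc Real.exp (c * t) ≤ Real.exp (w j * t) * 1 := by linarith
    _ ≤ Real.exp (w j * t) * |(m (Fin.castSucc j) : ℝ)| := by
        have := Real.exp_pos (w j * t)
        nlinarith
    _ = |Real.exp (w j * t) * ((m (Fin.castSucc j) : ℝ) + 0 * x j)| := by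
        rw [abs_mul, abs_of_pos (Real.exp_pos _)]
        ring_nf
    _ ≤ ‖latVec w t x m‖ := h2

lemma exp_neg_le_norm_latVec (w : Fin d → ℝ) (hw0 : ∀ i, 0 ≤ w i) {t : ℝ} (ht : 0 ≤ t)
    (x : Fin d → ℝ) {m : Fin (d+1) → ℤ} (hm : m ≠ 0) :
    Real.exp (-t) ≤ ‖latVec w t x m‖ := by
  by_cases hq : m (Fin.last d) = 0
  · have h1 := norm_latVec_of_last_eq_zero w (c := 0) (fun i => hw0 i) le_rfl ht x hm hq
    have h2 : Real.exp (-t) ≤ Real.exp (0 * t) := by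
      apply Real.exp_le_exp.mpr
      linarith
    linarith
  · have h2 := norm_le_pi_norm (latVec w t x m) (Fin.last d)
    rw [latVec_last, Real.norm_eq_abs] at h2
    have h3 : (1:ℝ) ≤ |(m (Fin.last d) : ℝ)| := by
      rw [← Int.cast_abs]
      exact_mod_cast Int.one_le_abs hq
    calc Real.exp (-t) = Real.exp (-t) * 1 := by ring
      _ ≤ Real.exp (-t) * |(m (Fin.last d) : ℝ)| := by
          have := Real.exp_pos (-t)
          nlinarith
      _ = |Real.exp (-t) * (m (Fin.last d) : ℝ)| := by
          rw [abs_mul, abs_of_pos (Real.exp_pos _)]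
      _ ≤ ‖latVec w t x m‖ := h2

lemma exp_neg_le_latticeDelta (w : Fin d → ℝ) (hw0 : ∀ i, 0 ≤ w i) {t : ℝ} (ht : 0 ≤ t)
    (x : Fin d → ℝ) : Real.exp (-t) ≤ latticeDelta d w t x := by
  apply le_csInf (deltaSet_nonempty w t x)
  rintro r ⟨m, hm, rfl⟩
  exact exp_neg_le_norm_latVec w hw0 ht x hm

lemma latticeDelta_pos (w : Fin d → ℝ) (hw0 : ∀ i, 0 ≤ w i) {t : ℝ} (ht : 0 ≤ t)
    (x : Fin d → ℝ) : 0 < latticeDelta d w t x :=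
  lt_of_lt_of_le (Real.exp_pos _) (exp_neg_le_latticeDelta w hw0 ht x)



lemma dirichlet_weighted (w : Fin d → ℝ) (hw0 : ∀ i, 0 ≤ w i) (hsum : ∑ i, w i = 1)
    (x : Fin d → ℝ) {Q : ℝ} (hQ : 1 ≤ Q) :
    ∃ (q : ℕ) (p : Fin d → ℤ), 0 < q ∧ (q : ℝ) ≤ 2 ^ d * Q ∧
      ∀ i, |(q : ℝ) * x i - (p i : ℝ)| ≤ Q ^ (-(w i)) := by
  have hQ0 : (0:ℝ) < Q := lt_of_lt_of_le one_pos hQ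
  set n : Fin d → ℕ := fun i => ⌈Q ^ (w i)⌉₊ with hn
  have hone : ∀ i, (1:ℝ) ≤ Q ^ (w i) := fun i => Real.one_le_rpow hQ (hw0 i)
  have hrpos : ∀ i, (0:ℝ) < Q ^ (w i) := fun i => lt_of_lt_of_le one_pos (hone i)
  have hnpos : ∀ i, 0 < n i := fun i => Nat.ceil_pos.mpr (hrpos i)
  have hnpos' : ∀ i, (0:ℝ) < (n i : ℝ) := fun i => by exact_mod_cast hnpos i
  have hnge : ∀ i, Q ^ (w i) ≤ (n i : ℝ) := fun i => Nat.le_ceil _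
  set N : ℕ := ∏ i, n i with hN
  have hNle : (N : ℝ) ≤ 2 ^ d * Q := by
    have h1 : (N : ℝ) = ∏ i, (n i : ℝ) := by rw [hN]; push_cast; rfl
    have h2 : ∀ i ∈ Finset.univ, (n i : ℝ) ≤ 2 * Q ^ (w i) := by
      intro i _
      have hc := Nat.ceil_lt_add_one (le_of_lt (hrpos i))
      have ho := hone i
      have : (n i : ℝ) < Q ^ (w i) + 1 := hc
      linarith
    have h3 : (∏ i, (n i : ℝ)) ≤ ∏ i, (2 * Q ^ (w i)) := by
      apply Finset.prod_le_prod
      · intro i _; positivity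
      · exact h2
    have h4 : (∏ i, (2 * Q ^ (w i))) = 2 ^ d * Q := by
      rw [Finset.prod_mul_distrib, Finset.prod_const,
        ← Real.rpow_sum_of_pos hQ0, hsum, Real.rpow_one]
      simp
    rw [h1]
    rw [h4] at h3
    exact h3
  have hFlt : ∀ (a : Fin (N+1)) (i : Fin d),
      ⌊Int.fract (((a : ℕ) : ℝ) * x i) * (n i : ℝ)⌋₊ < n i := by
    intro a i
    rw [Nat.floor_lt (mul_nonneg (Int.fract_nonneg _) (hnpos' i).le)]
    calc Int.fract (((a : ℕ) : ℝ) * x i) * (n i : ℝ) < 1 * (n i : ℝ) :=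
          mul_lt_mul_of_pos_right (Int.fract_lt_one _) (hnpos' i)
      _ = (n i : ℝ) := one_mul _
  have hcard : Fintype.card (∀ i, Fin (n i)) < Fintype.card (Fin (N+1)) := by
    simp [Fintype.card_pi, hN]
  obtain ⟨a, b, hab, hfab⟩ := Fintype.exists_ne_map_eq_of_card_lt
    (fun (a : Fin (N+1)) => (fun i => (⟨_, hFlt a i⟩ : Fin (n i)))) hcard
  -- key construction for a.1 < b.1
  have key : ∀ (a b : Fin (N+1)), (a:ℕ) < (b:ℕ) →
      (∀ i, ⌊Int.fract (((a:ℕ):ℝ) * x i) * (n i : ℝ)⌋₊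
          = ⌊Int.fract (((b:ℕ):ℝ) * x i) * (n i : ℝ)⌋₊) →
      ∃ (q : ℕ) (p : Fin d → ℤ), 0 < q ∧ (q : ℝ) ≤ 2 ^ d * Q ∧
        ∀ i, |(q : ℝ) * x i - (p i : ℝ)| ≤ Q ^ (-(w i)) := by
    intro a b hlt hfloor
    refine ⟨(b:ℕ) - (a:ℕ), fun i => ⌊((b:ℕ):ℝ) * x i⌋ - ⌊((a:ℕ):ℝ) * x i⌋, by omega, ?_, ?_⟩
    · have hbN : ((b:ℕ):ℝ) ≤ N := by exact_mod_cast Nat.lt_succ_iff.mp b.isLt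
      have : (((b:ℕ) - (a:ℕ) : ℕ) : ℝ) ≤ ((b:ℕ):ℝ) := by
        have : (b:ℕ) - (a:ℕ) ≤ (b:ℕ) := Nat.sub_le _ _
        exact_mod_cast this
      linarith
    · intro i
      have hcast : (((b:ℕ) - (a:ℕ) : ℕ) : ℝ) = ((b:ℕ):ℝ) - ((a:ℕ):ℝ) := by
        have := le_of_lt hlt
        push_cast [Nat.cast_sub this]
        ring
      have hdiff : (((b:ℕ) - (a:ℕ) : ℕ) : ℝ) * x i
          - ((⌊((b:ℕ):ℝ) * x i⌋ - ⌊((a:ℕ):ℝ) * x i⌋ : ℤ) : ℝ)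
          = Int.fract (((b:ℕ):ℝ) * x i) - Int.fract (((a:ℕ):ℝ) * x i) := by
        rw [hcast]
        unfold Int.fract
        push_cast
        ring
      rw [hdiff]
      set X := Int.fract (((a:ℕ):ℝ) * x i) * (n i : ℝ) with hX
      set Y := Int.fract (((b:ℕ):ℝ) * x i) * (n i : ℝ) with hY
      set k := ⌊X⌋₊ with hk
      have hkY : k = ⌊Y⌋₊ := hfloor i
      have hX0 : 0 ≤ X := by rw [hX]; exact mul_nonneg (Int.fract_nonneg _) (hnpos' i).le
      have hY0 : 0 ≤ Y := by rw [hY]; exact mul_nonneg (Int.fract_nonneg _) (hnpos' i).le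
      have h1 : (k:ℝ) ≤ X := Nat.floor_le hX0
      have h2 : X < (k:ℝ) + 1 := Nat.lt_floor_add_one X
      have h3 : (k:ℝ) ≤ Y := by rw [hkY]; exact Nat.floor_le hY0
      have h4 : Y < (k:ℝ) + 1 := by rw [hkY]; exact Nat.lt_floor_add_one Y
      have h5 : |Int.fract (((b:ℕ):ℝ) * x i) - Int.fract (((a:ℕ):ℝ) * x i)| * (n i : ℝ) < 1 := by
        rw [← abs_of_pos (hnpos' i), ← abs_mul, sub_mul, ← hX, ← hY]
        rw [abs_sub_lt_iff]
        constructor <;> linarith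
      have h6 : |Int.fract (((b:ℕ):ℝ) * x i) - Int.fract (((a:ℕ):ℝ) * x i)| < 1 / (n i : ℝ) := by
        rw [lt_div_iff₀ (hnpos' i)]
        exact h5
      have h7 : 1 / (n i : ℝ) ≤ Q ^ (-(w i)) := by
        rw [Real.rpow_neg (le_of_lt hQ0), ← one_div]
        exact one_div_le_one_div_of_le (hrpos i) (hnge i)
      linarith [h6, h7]
  have habne : (a:ℕ) ≠ (b:ℕ) := fun h => hab (Fin.ext h)
  rcases lt_or_gt_of_ne habne with h | h
  · exact key a b h (fun i => congrArg Fin.val (congrFun hfab i))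
  · exact key b a h (fun i => congrArg Fin.val (congrFun hfab.symm i))

lemma latticeDelta_le_two_pow (w : Fin d → ℝ) (hw0 : ∀ i, 0 ≤ w i) (hsum : ∑ i, w i = 1)
    (x : Fin d → ℝ) {t : ℝ} (ht : 0 ≤ t) :
    latticeDelta d w t x ≤ 2 ^ d := by
  obtain ⟨q, p, hq, hqle, hp⟩ :=
    dirichlet_weighted w hw0 hsum x (Q := Real.exp t) (Real.one_le_exp ht)
  set m : Fin (d+1) → ℤ :=
    fun i => Fin.lastCases (motive := fun _ => ℤ) (q:ℤ) (fun j => -(p j)) i with hm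
  have hm_last : m (Fin.last d) = (q:ℤ) := by simp [hm]
  have hm_cs : ∀ j, m (Fin.castSucc j) = -(p j) := fun j => by simp [hm]
  have hmne : m ≠ 0 := by
    intro h
    have := congrFun h (Fin.last d)
    rw [hm_last] at this
    simp at this
    omega
  have h2d : (1:ℝ) ≤ 2 ^ d := one_le_pow₀ (by norm_num)
  have hnorm : ‖latVec w t x m‖ ≤ 2 ^ d := by
    rw [pi_norm_le_iff_of_nonneg (by positivity)]
    intro i
    refine Fin.lastCases ?_ ?_ i
    · rw [latVec_last, hm_last, Real.norm_eq_abs]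
      push_cast
      rw [abs_mul, abs_of_pos (Real.exp_pos _), abs_of_nonneg (by positivity : (0:ℝ) ≤ (q:ℝ))]
      calc Real.exp (-t) * (q:ℝ) ≤ Real.exp (-t) * (2 ^ d * Real.exp t) := by
            have := Real.exp_pos (-t); nlinarith
        _ = 2 ^ d * (Real.exp (-t) * Real.exp t) := by ring
        _ = 2 ^ d := by rw [← Real.exp_add]; simp
    · intro j
      rw [latVec_castSucc, hm_cs, hm_last, Real.norm_eq_abs]
      push_cast
      rw [abs_mul, abs_of_pos (Real.exp_pos _)]
      have hpj : |-(p j : ℝ) + (q:ℝ) * x j| ≤ (Real.exp t) ^ (-(w j)) := by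
        have h := hp j
        have heq : -(p j : ℝ) + (q:ℝ) * x j = (q:ℝ) * x j - (p j : ℝ) := by ring
        rw [heq]
        exact h
      calc Real.exp (w j * t) * |-(p j : ℝ) + (q:ℝ) * x j|
          ≤ Real.exp (w j * t) * (Real.exp t) ^ (-(w j)) := by
            have := Real.exp_pos (w j * t)
            nlinarith [abs_nonneg (-(p j : ℝ) + (q:ℝ) * x j)]
        _ = 1 := by
            rw [exp_rpow', ← Real.exp_add,
              show w j * t + t * -(w j) = 0 from by ring, Real.exp_zero]
        _ ≤ 2 ^ d := h2d
  calc latticeDelta d w t x ≤ ‖latVec w t x m‖ :=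
        csInf_le (deltaSet_bddBelow w t x) ⟨m, hmne, rfl⟩
    _ ≤ 2 ^ d := hnorm

end DaniAux

/-- `τ̂_W(x) = liminf_{t→∞} inf_{w ∈ W} (-1/t) log δ(a_{w,t} u_x ℤ^{d+1})`. -/
noncomputable def tauHat (d : ℕ) (W : Set (Fin d → ℝ)) (x : Fin d → ℝ) : ℝ :=
  liminf (fun t : ℝ =>
    sInf ((fun w => (-1 / t) * Real.log (latticeDelta d w t x)) '' W)) atTop

/-- The `W`-uniform exponent `σ̂_W(x)`. -/
noncomputable def sigmaHatW (d : ℕ) (W : Set (Fin d → ℝ)) (x : Fin d → ℝ) : ℝ :=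
  sSup {ε : ℝ | ∃ Q₀ > (0 : ℝ), ∀ Q > Q₀, ∀ w ∈ W,
    ∃ (p : Fin d → ℤ) (q : ℕ), 0 < q ∧ (q : ℝ) ≤ Q ∧
      ∀ i, w i ≠ 0 → |(q : ℝ) * x i - (p i : ℝ)| ^ (1 / w i) ≤ Q ^ (-ε)}

set_option maxHeartbeats 4000000

/-- For a set of weights `W` with `w_min > 0` and `τ := τ̂_W(x) < 1`, the `W`-uniform
exponent satisfies `(τ + w_max)/((1 - τ) w_max) ≤ σ̂_W(x) ≤ (τ + w_min)/((1 - τ) w_min)`. -/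
theorem dani_correspondence_uniform (d : ℕ) (W : Set (Fin d → ℝ))
    (hW : ∀ w ∈ W, (∀ i, 0 ≤ w i ∧ w i ≤ 1) ∧ ∑ i, w i = 1)
    (wmin wmax : ℝ)
    (hwmin : wmin = sInf {t : ℝ | ∃ w ∈ W, ∃ i : Fin d, t = w i})
    (hwmax : wmax = sSup {t : ℝ | ∃ w ∈ W, ∃ i : Fin d, t = w i})
    (hmin : 0 < wmin) (hmax : wmax < 1)
    (x : Fin d → ℝ) (hτ : tauHat d W x < 1) :
    (tauHat d W x + wmax) / ((1 - tauHat d W x) * wmax) ≤ sigmaHatW d W x ∧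
      sigmaHatW d W x ≤ (tauHat d W x + wmin) / ((1 - tauHat d W x) * wmin) := by
  classical
  -- W is nonempty
  have hvne : W.Nonempty := by
    by_contra h
    rw [Set.not_nonempty_iff_eq_empty] at h
    have hempty : {t : ℝ | ∃ w ∈ W, ∃ i : Fin d, t = w i} = ∅ := by
      subst h; ext r; simp
    rw [hempty, Real.sInf_empty] at hwmin
    linarith
  obtain ⟨w₀, hw₀⟩ := hvne
  have hd : 0 < d := by
    rcases Nat.eq_zero_or_pos d with h | h
    · exfalso
      have hs := (hW w₀ hw₀).2
      subst h
      simp at hs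
    · exact h
  have hValBdd : BddBelow {t : ℝ | ∃ w ∈ W, ∃ i : Fin d, t = w i} := by
    refine ⟨0, ?_⟩; rintro r ⟨w, hw, i, rfl⟩; exact ((hW w hw).1 i).1
  have hValBddA : BddAbove {t : ℝ | ∃ w ∈ W, ∃ i : Fin d, t = w i} := by
    refine ⟨1, ?_⟩; rintro r ⟨w, hw, i, rfl⟩; exact ((hW w hw).1 i).2
  have hwmin_le : ∀ w ∈ W, ∀ i, wmin ≤ w i := by
    intro w hw i; rw [hwmin]; exact csInf_le hValBdd ⟨w, hw, i, rfl⟩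
  have hle_wmax : ∀ w ∈ W, ∀ i, w i ≤ wmax := by
    intro w hw i; rw [hwmax]; exact le_csSup hValBddA ⟨w, hw, i, rfl⟩
  have hminmax : wmin ≤ wmax :=
    le_trans (hwmin_le w₀ hw₀ ⟨0, hd⟩) (hle_wmax w₀ hw₀ ⟨0, hd⟩)
  have hwmaxpos : 0 < wmax := lt_of_lt_of_le hmin hminmax
  have hw0 : ∀ w ∈ W, ∀ i, 0 ≤ w i := fun w hw i => ((hW w hw).1 i).1
  set τ : ℝ := tauHat d W x with hτdef
  set f : ℝ → ℝ :=
    fun t => sInf ((fun w => (-1/t) * Real.log (latticeDelta d w t x)) '' W) with hf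
  have hτf : τ = liminf f atTop := rfl
  have hgmem : ∀ t : ℝ, ∀ w ∈ W, (-1/t) * Real.log (latticeDelta d w t x)
      ∈ (fun w => (-1/t) * Real.log (latticeDelta d w t x)) '' W :=
    fun t w hw => ⟨w, hw, rfl⟩
  have himne : ∀ t : ℝ,
      ((fun w => (-1/t) * Real.log (latticeDelta d w t x)) '' W).Nonempty :=
    fun t => ⟨_, hgmem t w₀ hw₀⟩
  have hneg1t : ∀ t : ℝ, 0 < t → (-1/t : ℝ) ≤ 0 := by
    intro t ht
    rw [neg_div]
    exact neg_nonpos.mpr (by positivity)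
  have hg_ge : ∀ w ∈ W, ∀ t : ℝ, 0 < t →
      -((d : ℝ) * Real.log 2)/t ≤ (-1/t) * Real.log (latticeDelta d w t x) := by
    intro w hw t ht
    have hδle := DaniAux.latticeDelta_le_two_pow w (hw0 w hw) (hW w hw).2 x ht.le
    have hδpos := DaniAux.latticeDelta_pos w (hw0 w hw) ht.le x
    have hlog : Real.log (latticeDelta d w t x) ≤ (d : ℝ) * Real.log 2 := by
      calc Real.log (latticeDelta d w t x) ≤ Real.log (2 ^ d) :=
            (Real.log_le_log_iff hδpos (by positivity)).mpr hδle
        _ = (d : ℝ) * Real.log 2 := by rw [Real.log_pow]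
    calc -((d : ℝ) * Real.log 2)/t = (-1/t) * ((d : ℝ) * Real.log 2) := by ring
      _ ≤ (-1/t) * Real.log (latticeDelta d w t x) :=
          mul_le_mul_of_nonpos_left hlog (hneg1t t ht)
  have hg_le : ∀ w ∈ W, ∀ t : ℝ, 0 < t →
      (-1/t) * Real.log (latticeDelta d w t x) ≤ 1 := by
    intro w hw t ht
    have hδge := DaniAux.exp_neg_le_latticeDelta w (hw0 w hw) ht.le x
    have hδpos := DaniAux.latticeDelta_pos w (hw0 w hw) ht.le x
    have hlog : -t ≤ Real.log (latticeDelta d w t x) := by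
      have h1 := (Real.log_le_log_iff (Real.exp_pos (-t)) hδpos).mpr hδge
      rwa [Real.log_exp] at h1
    have h2 : (-1/t) * Real.log (latticeDelta d w t x) ≤ (-1/t) * (-t) :=
      mul_le_mul_of_nonpos_left hlog (hneg1t t ht)
    have h3 : (-1/t) * (-t) = 1 := by field_simp
    linarith
  have hbddim : ∀ t : ℝ, 0 < t →
      BddBelow ((fun w => (-1/t) * Real.log (latticeDelta d w t x)) '' W) := by
    intro t ht
    refine ⟨-((d : ℝ) * Real.log 2)/t, ?_⟩
    rintro r ⟨w, hw, rfl⟩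
    exact hg_ge w hw t ht
  have hf_le : ∀ t : ℝ, 0 < t → f t ≤ 1 := fun t ht =>
    csInf_le_of_le (hbddim t ht) (hgmem t w₀ hw₀) (hg_le w₀ hw₀ t ht)
  have hf_ge : ∀ t : ℝ, 0 < t → -((d : ℝ) * Real.log 2)/t ≤ f t := fun t ht =>
    le_csInf (himne t) (by rintro r ⟨w, hw, rfl⟩; exact hg_ge w hw t ht)
  have hlog2 : 0 ≤ (d : ℝ) * Real.log 2 :=
    mul_nonneg (Nat.cast_nonneg d) (Real.log_nonneg one_le_two)
  have hf_ge' : ∀ t : ℝ, 1 ≤ t → -((d : ℝ) * Real.log 2) ≤ f t := by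
    intro t ht
    refine le_trans ?_ (hf_ge t (by linarith))
    rw [neg_div]
    exact neg_le_neg (div_le_self hlog2 ht)
  have hBddA : IsBoundedUnder (· ≤ ·) atTop f :=
    ⟨1, by rw [eventually_map]
           filter_upwards [eventually_gt_atTop (0:ℝ)] with t ht using hf_le t ht⟩
  have hBddB : IsBoundedUnder (· ≥ ·) atTop f :=
    ⟨-((d : ℝ) * Real.log 2), by
      rw [eventually_map]
      filter_upwards [eventually_ge_atTop (1:ℝ)] with t ht using hf_ge' t ht⟩
  have hCob : IsCoboundedUnder (· ≥ ·) atTop f := hBddA.isCoboundedUnder_flip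
  have hτ0 : 0 ≤ τ := by
    by_contra hcon
    push_neg at hcon
    have h2 : ∀ η : ℝ, 0 < η → -η ≤ τ := by
      intro η hη
      rw [hτf]
      apply le_liminf_of_le hCob
      filter_upwards [eventually_ge_atTop (max 1 (((d : ℝ) * Real.log 2)/η))] with t ht
      have ht1 : (1:ℝ) ≤ t := le_trans (le_max_left _ _) ht
      have ht2 : ((d : ℝ) * Real.log 2)/η ≤ t := le_trans (le_max_right _ _) ht
      have ht0 : (0:ℝ) < t := by linarith
      refine le_trans ?_ (hf_ge t ht0)
      rw [neg_div, neg_le_neg_iff, div_le_iff₀ ht0]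
      rw [div_le_iff₀ hη] at ht2
      nlinarith
    have h3 := h2 (-τ/2) (by linarith)
    linarith
  set S : Set ℝ := {ε : ℝ | ∃ Q₀ > (0 : ℝ), ∀ Q > Q₀, ∀ w ∈ W,
    ∃ (p : Fin d → ℤ) (q : ℕ), 0 < q ∧ (q : ℝ) ≤ Q ∧
      ∀ i, w i ≠ 0 → |(q : ℝ) * x i - (p i : ℝ)| ^ (1 / w i) ≤ Q ^ (-ε)} with hS
  have hsigma : sigmaHatW d W x = sSup S := rfl
  -- trivial members
  have hS0 : ∀ ε : ℝ, ε ≤ 0 → ε ∈ S := by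
    intro ε hε
    refine ⟨1, one_pos, ?_⟩
    intro Q hQ w hw
    refine ⟨fun i => round (x i), 1, one_pos, by exact_mod_cast hQ.le, ?_⟩
    intro i hwi
    have hw0i : 0 ≤ w i := hw0 w hw i
    have h1 : |((1:ℕ):ℝ) * x i - ((round (x i) : ℤ) : ℝ)| ≤ 1 := by
      push_cast
      rw [one_mul]
      exact (abs_sub_round (x i)).trans (by norm_num)
    have h2 : |((1:ℕ):ℝ) * x i - ((round (x i) : ℤ) : ℝ)| ^ (1 / w i) ≤ 1 :=
      Real.rpow_le_one (abs_nonneg _) h1 (one_div_nonneg.mpr hw0i)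
    exact h2.trans (Real.one_le_rpow (by linarith) (by linarith))
  -- upper bound for members of S
  have hSub : ∀ ε ∈ S, ε ≤ (τ + wmin)/((1-τ)*wmin) := by
    intro ε hε
    have hden2 : (0:ℝ) < (1-τ)*wmin := mul_pos (by linarith) hmin
    by_cases hε1 : ε ≤ 1
    · have hB : 1 ≤ (τ + wmin)/((1-τ)*wmin) := by
        rw [le_div_iff₀ hden2]
        nlinarith
      linarith
    · push_neg at hε1
      obtain ⟨Q₀, hQ₀, hεprop⟩ := hε
      set τ' : ℝ := wmin*(ε-1)/(1+wmin*ε) with hτ'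
      have hden : (0:ℝ) < 1 + wmin*ε := by nlinarith
      have hτ'A : τ' * (1+wmin*ε) = wmin*(ε-1) := by
        rw [hτ']; field_simp
      have hτ'pos : 0 < τ' := div_pos (mul_pos hmin (by linarith)) hden
      have hτ'lt1 : τ' < 1 := by
        rw [hτ', div_lt_one hden]; nlinarith
      have key : τ' ≤ τ := by
        rw [hτf]
        apply le_liminf_of_le hCob
        filter_upwards [eventually_ge_atTop (max 1 ((Real.log Q₀ + 1)/(1-τ')))] with t ht
        have ht1 : (1:ℝ) ≤ t := le_trans (le_max_left _ _) ht
        have ht0 : (0:ℝ) < t := by linarith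
        have ht2 : (Real.log Q₀ + 1)/(1-τ') ≤ t := le_trans (le_max_right _ _) ht
        have h1τ' : (0:ℝ) < 1 - τ' := by linarith
        have hlogt : Real.log Q₀ + 1 ≤ (1-τ')*t := by
          rw [div_le_iff₀ h1τ'] at ht2; linarith
        set Q : ℝ := Real.exp ((1-τ')*t) with hQdef
        have hQgt : Q > Q₀ := by
          calc Q₀ = Real.exp (Real.log Q₀) := (Real.exp_log hQ₀).symm
            _ < Q := by rw [hQdef]; exact Real.exp_lt_exp.mpr (by linarith)
        refine le_csInf (himne t) ?_
        rintro r ⟨w, hw, rfl⟩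
        obtain ⟨p, q, hq0, hqQ, happ⟩ := hεprop Q hQgt w hw
        set m : Fin (d+1) → ℤ :=
          fun i => Fin.lastCases (motive := fun _ => ℤ) (q:ℤ) (fun j => -(p j)) i with hm
        have hm_last : m (Fin.last d) = (q:ℤ) := by simp [hm]
        have hm_cs : ∀ j, m (Fin.castSucc j) = -(p j) := fun j => by simp [hm]
        have hmne : m ≠ 0 := by
          intro h
          have := congrFun h (Fin.last d)
          rw [hm_last] at this
          simp at this
          omega
        have hnorm : ‖latVec w t x m‖ ≤ Real.exp (-τ' * t) := by
          rw [pi_norm_le_iff_of_nonneg (Real.exp_pos _).le]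
          intro i
          refine Fin.lastCases ?_ ?_ i
          · rw [DaniAux.latVec_last, hm_last, Real.norm_eq_abs]
            push_cast
            rw [abs_mul, abs_of_pos (Real.exp_pos _),
              abs_of_nonneg (by positivity : (0:ℝ) ≤ (q:ℝ))]
            calc Real.exp (-t) * (q:ℝ) ≤ Real.exp (-t) * Q :=
                  mul_le_mul_of_nonneg_left hqQ (Real.exp_pos _).le
              _ = Real.exp (-τ' * t) := by
                  rw [hQdef, ← Real.exp_add,
                    show -t + (1-τ')*t = -τ' * t from by ring]
          · intro j
            rw [DaniAux.latVec_castSucc, hm_cs, hm_last, Real.norm_eq_abs]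
            push_cast
            rw [abs_mul, abs_of_pos (Real.exp_pos _)]
            have hwj : wmin ≤ w j := hwmin_le w hw j
            have hwjpos : 0 < w j := lt_of_lt_of_le hmin hwj
            have hbase := happ j (ne_of_gt hwjpos)
            have hQ0' : (0:ℝ) ≤ Q := (Real.exp_pos _).le
            have h2 : |(q:ℝ) * x j - (p j : ℝ)| ≤ Q ^ (-ε * w j) := by
              have h3 := Real.rpow_le_rpow (Real.rpow_nonneg (abs_nonneg _) _)
                hbase hwjpos.le
              rw [← Real.rpow_mul (abs_nonneg _), one_div,
                inv_mul_cancel₀ (ne_of_gt hwjpos), Real.rpow_one,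
                ← Real.rpow_mul hQ0'] at h3
              exact h3
            have heq : -(p j : ℝ) + (q:ℝ) * x j = (q:ℝ) * x j - (p j : ℝ) := by ring
            rw [heq]
            have hfac : w j * (1 - ε*(1-τ')) ≤ -τ' := by
              have hh : (w j * (1 - ε*(1-τ')) + τ') * (1+wmin*ε)
                  = (w j - wmin) * (1-ε) := by
                linear_combination (1 + w j * ε) * hτ'A
              nlinarith [mul_nonneg (sub_nonneg.mpr hwj) (by linarith : (0:ℝ) ≤ ε - 1)]
            have hineq : w j * t + (1-τ')*t*(-ε*(w j)) ≤ -τ' * t := by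
              nlinarith [mul_le_mul_of_nonneg_left hfac ht0.le]
            calc Real.exp (w j * t) * |(q:ℝ) * x j - (p j : ℝ)|
                ≤ Real.exp (w j * t) * Q ^ (-ε * w j) :=
                  mul_le_mul_of_nonneg_left h2 (Real.exp_pos _).le
              _ = Real.exp (w j * t + (1-τ')*t*(-ε*(w j))) := by
                  rw [hQdef, DaniAux.exp_rpow', ← Real.exp_add]
              _ ≤ Real.exp (-τ' * t) := Real.exp_le_exp.mpr hineq
        have hδle : latticeDelta d w t x ≤ Real.exp (-τ' * t) :=
          le_trans (csInf_le (DaniAux.deltaSet_bddBelow w t x) ⟨m, hmne, rfl⟩) hnorm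
        have hδpos := DaniAux.latticeDelta_pos w (hw0 w hw) ht0.le x
        have hlog : Real.log (latticeDelta d w t x) ≤ -τ' * t := by
          have h1 := (Real.log_le_log_iff hδpos (Real.exp_pos _)).mpr hδle
          rwa [Real.log_exp] at h1
        have h4 : (-1/t) * (-τ' * t) = τ' := by field_simp
        have h5 : (-1/t) * (-τ' * t) ≤ (-1/t) * Real.log (latticeDelta d w t x) :=
          mul_le_mul_of_nonpos_left hlog (hneg1t t ht0)
        linarith
      have h2 : wmin*(ε-1) ≤ τ * (1+wmin*ε) := by
        calc wmin*(ε-1) = τ' * (1+wmin*ε) := hτ'A.symm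
          _ ≤ τ * (1+wmin*ε) := mul_le_mul_of_nonneg_right key hden.le
      rw [le_div_iff₀ hden2]
      nlinarith
  -- lower bound: everything below the target is in S
  have hSup : ∀ ε : ℝ, ε < (τ + wmax)/((1-τ)*wmax) → ε ∈ S := by
    intro ε hεB
    rcases le_or_gt ε 0 with hε0 | hε0
    · exact hS0 ε hε0
    have hden1 : (0:ℝ) < (1-τ)*wmax := mul_pos (by linarith) hwmaxpos
    have hεB' : ε * ((1-τ)*wmax) < τ + wmax := (lt_div_iff₀ hden1).mp hεB
    obtain ⟨c0, hc0⟩ : ∃ c0 : ℝ, c0 = 1 + τ/wmax - ε*(1-τ) := ⟨_, rfl⟩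
    have hc0pos : 0 < c0 := by
      have h1 : ε*(1-τ) < (τ+wmax)/wmax := by
        rw [lt_div_iff₀ hwmaxpos]; nlinarith
      have h2 : (τ+wmax)/wmax = 1 + τ/wmax := by
        field_simp
        ring
      rw [h2] at h1
      rw [hc0]
      linarith
    have hchoice : ∃ η : ℝ, 0 < η ∧ η < wmin ∧ ε*(1-τ+η) ≤ 1 + (τ-η)/wmax - η/wmin := by
      have hKpos : 0 < 1/wmax + 1/wmin + ε := by positivity
      obtain ⟨X, hX⟩ : ∃ X : ℝ, X = min (wmin/2) (c0/(2*(1/wmax + 1/wmin + ε))) := ⟨_, rfl⟩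
      refine ⟨X, ?_, ?_, ?_⟩
      · rw [hX]
        exact lt_min (by linarith) (div_pos hc0pos (by positivity))
      · rw [hX]
        exact lt_of_le_of_lt (min_le_left _ _) (by linarith)
      · have h1 : X ≤ c0/(2*(1/wmax + 1/wmin + ε)) := by
          rw [hX]; exact min_le_right _ _
        have h2 : X * (1/wmax + 1/wmin + ε) ≤ c0/2 := by
          calc X * (1/wmax + 1/wmin + ε)
              ≤ (c0/(2*(1/wmax + 1/wmin + ε))) * (1/wmax + 1/wmin + ε) :=
                mul_le_mul_of_nonneg_right h1 hKpos.le
            _ = c0/2 := by field_simp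
        have hexpand : 1 + (τ-X)/wmax - X/wmin - ε*(1-τ+X)
            = c0 - X * (1/wmax + 1/wmin + ε) := by
          rw [hc0]; ring
        linarith
    obtain ⟨η, hηpos, hηwmin, hkey⟩ := hchoice
    have hLg : ∀ w ∈ W, ∀ j, (τ-η)/wmax - η/wmin ≤ (τ-η)/(w j) := by
      intro w hw j
      have hwj : wmin ≤ w j := hwmin_le w hw j
      have hwjpos : 0 < w j := lt_of_lt_of_le hmin hwj
      have hwjmax : w j ≤ wmax := hle_wmax w hw j
      rcases le_or_gt 0 (τ-η) with hcase | hcase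
      · have h1 : (τ-η)/wmax ≤ (τ-η)/(w j) := by
          rw [div_le_div_iff₀ hwmaxpos hwjpos]
          exact mul_le_mul_of_nonneg_left hwjmax hcase
        have h2 : 0 ≤ η/wmin := by positivity
        linarith
      · have h1 : (τ-η)/wmin ≤ (τ-η)/(w j) := by
          rw [div_le_div_iff₀ hmin hwjpos]
          exact mul_le_mul_of_nonpos_left hwj hcase.le
        have h3 : (τ-η)/wmax ≤ 0 :=
          div_nonpos_of_nonpos_of_nonneg hcase.le hwmaxpos.le
        have h4 : (τ-η)/wmin = τ/wmin - η/wmin := by ring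
        have h5 : 0 ≤ τ/wmin := by positivity
        linarith
    have hτlt : τ - η < liminf f atTop := by rw [← hτf]; linarith
    have hev := eventually_lt_of_lt_liminf hτlt hBddB
    obtain ⟨T₀, hT₀⟩ := eventually_atTop.mp (hev.and (eventually_ge_atTop (1:ℝ)))
    have h1τη : (0:ℝ) < 1 - τ + η := by linarith
    refine ⟨max 1 (Real.exp ((1-τ+η)*(T₀+1))),
      lt_of_lt_of_le one_pos (le_max_left _ _), ?_⟩
    intro Q hQ w hw
    have hQ1 : 1 < Q := lt_of_le_of_lt (le_max_left _ _) hQ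
    have hQ0 : (0:ℝ) < Q := by linarith
    have hQT : Real.exp ((1-τ+η)*(T₀+1)) < Q := lt_of_le_of_lt (le_max_right _ _) hQ
    set t : ℝ := Real.log Q / (1-τ+η) with htdef
    have hlogQ : Real.log Q = (1-τ+η) * t := by
      rw [htdef]; field_simp
    have htlarge : T₀ + 1 ≤ t := by
      have h1 : (1-τ+η)*(T₀+1) < Real.log Q := by
        have h2 := Real.log_lt_log (Real.exp_pos _) hQT
        rwa [Real.log_exp] at h2
      rw [hlogQ] at h1
      nlinarith
    obtain ⟨hft, ht1⟩ := hT₀ t (by linarith)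
    have ht0 : (0:ℝ) < t := by linarith
    have hlt : latticeDelta d w t x < Real.exp (-(τ-η)*t) := by
      have h1 : τ - η < (-1/t) * Real.log (latticeDelta d w t x) :=
        lt_of_lt_of_le hft (csInf_le (hbddim t ht0) (hgmem t w hw))
      have h3 : (-1/t) * Real.log (latticeDelta d w t x)
          = -(Real.log (latticeDelta d w t x)/t) := by ring
      rw [h3] at h1
      have h4 : Real.log (latticeDelta d w t x)/t < -(τ-η) := by linarith
      have h5 : Real.log (latticeDelta d w t x) < -(τ-η)*t := by
        have h6 := mul_lt_mul_of_pos_right h4 ht0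
        have h7 : Real.log (latticeDelta d w t x)/t*t = Real.log (latticeDelta d w t x) := by
          field_simp
        rw [h7] at h6
        exact h6
      have hδpos := DaniAux.latticeDelta_pos w (hw0 w hw) ht0.le x
      calc latticeDelta d w t x = Real.exp (Real.log (latticeDelta d w t x)) :=
            (Real.exp_log hδpos).symm
        _ < Real.exp (-(τ-η)*t) := Real.exp_lt_exp.mpr h5
    have hlt' : sInf {r : ℝ | ∃ m : Fin (d + 1) → ℤ, m ≠ 0 ∧ r = ‖latVec w t x m‖}
        < Real.exp (-(τ-η)*t) := hlt
    obtain ⟨r, hrmem, hrlt⟩ :=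
      exists_lt_of_csInf_lt (DaniAux.deltaSet_nonempty w t x) hlt'
    obtain ⟨m, hmne, rfl⟩ := hrmem
    set M : Fin (d+1) → ℤ := if m (Fin.last d) < 0 then -m else m with hM
    have hMnorm : ‖latVec w t x M‖ = ‖latVec w t x m‖ := by
      rw [hM]; split_ifs with h
      · rw [DaniAux.latVec_neg, norm_neg]
      · rfl
    have hMne : M ≠ 0 := by
      rw [hM]; split_ifs with h
      · exact neg_ne_zero.mpr hmne
      · exact hmne
    have hMlast : 0 ≤ M (Fin.last d) := by
      rw [hM]; split_ifs with h
      · simp only [Pi.neg_apply]; omega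
      · push_neg at h; exact h
    have hMnlt : ‖latVec w t x M‖ < Real.exp (-(τ-η)*t) := by rw [hMnorm]; exact hrlt
    have hqz : M (Fin.last d) ≠ 0 := by
      intro h0
      have h1 := DaniAux.norm_latVec_of_last_eq_zero w (hwmin_le w hw) hmin.le ht0.le x hMne h0
      have h2 : Real.exp (-(τ-η)*t) ≤ Real.exp (wmin*t) := by
        apply Real.exp_le_exp.mpr
        nlinarith
      linarith
    have hMpos : 0 < M (Fin.last d) := lt_of_le_of_ne hMlast (Ne.symm hqz)
    set q : ℕ := (M (Fin.last d)).toNat with hq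
    have hqcast : ((q:ℤ)) = M (Fin.last d) := Int.toNat_of_nonneg hMlast
    have hqR : ((q:ℕ):ℝ) = ((M (Fin.last d) : ℤ) : ℝ) := by exact_mod_cast hqcast
    have hqpos : 0 < q := by rw [hq]; omega
    refine ⟨fun j => -(M (Fin.castSucc j)), q, hqpos, ?_, ?_⟩
    · have h1 := norm_le_pi_norm (latVec w t x M) (Fin.last d)
      rw [DaniAux.latVec_last, Real.norm_eq_abs, abs_mul,
        abs_of_pos (Real.exp_pos _)] at h1
      have h2 : |((M (Fin.last d) : ℤ):ℝ)| = (q:ℝ) := by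
        rw [hqR]
        exact abs_of_nonneg (by rw [← hqR]; positivity)
      rw [h2] at h1
      have h3 : Real.exp (-t) * (q:ℝ) < Real.exp (-(τ-η)*t) := lt_of_le_of_lt h1 hMnlt
      have h4 : (q:ℝ) < Real.exp ((1-τ+η)*t) := by
        have h5 := mul_lt_mul_of_pos_left h3 (Real.exp_pos t)
        rw [← mul_assoc, ← Real.exp_add, ← Real.exp_add,
          show t + -t = 0 from by ring, Real.exp_zero, one_mul,
          show t + -(τ-η)*t = (1-τ+η)*t from by ring] at h5
        exact h5
      have h6 : Real.exp ((1-τ+η)*t) = Q := by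
        rw [← hlogQ, Real.exp_log hQ0]
      rw [h6] at h4
      exact h4.le
    · intro i hwi
      have hwipos : 0 < w i := lt_of_lt_of_le hmin (hwmin_le w hw i)
      have h1 := norm_le_pi_norm (latVec w t x M) (Fin.castSucc i)
      rw [DaniAux.latVec_castSucc, Real.norm_eq_abs, abs_mul,
        abs_of_pos (Real.exp_pos _)] at h1
      have h2 : Real.exp (w i * t) * |(M (Fin.castSucc i) : ℝ) + (M (Fin.last d) : ℝ) * x i|
          < Real.exp (-(τ-η)*t) := lt_of_le_of_lt h1 hMnlt
      have heq : (q:ℝ) * x i - ((-(M (Fin.castSucc i)) : ℤ):ℝ)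
          = (M (Fin.castSucc i) : ℝ) + (M (Fin.last d) : ℝ) * x i := by
        rw [hqR]; push_cast; ring
      have h3 : |(q:ℝ) * x i - ((-(M (Fin.castSucc i)) : ℤ):ℝ)|
          < Real.exp (-(w i + τ - η)*t) := by
        rw [heq]
        have h4 : |(M (Fin.castSucc i) : ℝ) + (M (Fin.last d) : ℝ) * x i|
            < Real.exp (-(τ-η)*t) / Real.exp (w i * t) := by
          rw [lt_div_iff₀ (Real.exp_pos _)]
          nlinarith
        rw [← Real.exp_sub, show -(τ-η)*t - w i*t = -(w i + τ - η)*t from by ring] at h4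
        exact h4
      have h5 : |(q:ℝ) * x i - ((-(M (Fin.castSucc i)) : ℤ):ℝ)| ^ (1/w i)
          ≤ (Real.exp (-(w i + τ - η)*t)) ^ (1/w i) :=
        Real.rpow_le_rpow (abs_nonneg _) h3.le (by positivity)
      rw [DaniAux.exp_rpow'] at h5
      refine h5.trans ?_
      have hQε : Q ^ (-ε) = Real.exp ((1-τ+η)*t * (-ε)) := by
        rw [← Real.exp_log hQ0, DaniAux.exp_rpow', hlogQ]
      rw [hQε]
      apply Real.exp_le_exp.mpr
      have hL := hLg w hw i
      have hwi1 : (w i + τ - η)/(w i) = 1 + (τ-η)/(w i) := by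
        field_simp
        ring
      have hmain : ε*(1-τ+η) ≤ (w i + τ - η)/(w i) := by
        rw [hwi1]; linarith
      have h6 : ε*(1-τ+η)*t ≤ ((w i + τ - η)/(w i))*t :=
        mul_le_mul_of_nonneg_right hmain ht0.le
      have e3 : -(w i + τ - η)*t * (1/w i) = -(((w i + τ - η)/(w i))*t) := by
        ring
      have e4 : (1-τ+η)*t * (-ε) = -(ε*(1-τ+η)*t) := by ring
      rw [e3, e4]
      exact neg_le_neg h6
  have hSne : S.Nonempty := ⟨0, hS0 0 le_rfl⟩
  have hSbdd : BddAbove S := ⟨(τ + wmin)/((1-τ)*wmin), fun ε hε => hSub ε hε⟩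
  constructor
  · rw [hsigma]
    by_contra hcon
    push_neg at hcon
    obtain ⟨c, hc1, hc2⟩ := exists_between hcon
    have h1 := le_csSup hSbdd (hSup c hc2)
    linarith
  · rw [hsigma]
    exact csSup_le hSne hSub
end

section
/- For a single weight w (with all coordinates positive) and x ∈ ℝ^d, if τ := τ̂_w(x) < 1 is the divergence rate defined with the w-quasinorm used as the lattice norm, then σ̂_w(x) = (1 + τ)/(1 − τ). -/
open Filter

/-- The `w`-quasinorm of a vector `v ∈ ℝ^{d+1}`:
`max (max_i |v_i| ^ (1/w_i)) |v_{d+1}|`. -/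
noncomputable def wNorm {d : ℕ} (w : Fin d → ℝ) (v : Fin (d + 1) → ℝ) : ℝ :=
  max (⨆ i : Fin d, |v (Fin.castSucc i)| ^ (1 / w i)) |v (Fin.last d)|

/-- `δ_w(a_{w,t} u_x ℤ^{d+1})`: the `w`-quasinorm of a shortest nonzero lattice vector. -/
noncomputable def latticeDeltaW (d : ℕ) (w : Fin d → ℝ) (t : ℝ) (x : Fin d → ℝ) : ℝ :=
  sInf {r : ℝ | ∃ m : Fin (d + 1) → ℤ, m ≠ 0 ∧ r = wNorm w (latVec w t x m)}

/-- `τ̂_w(x) = liminf_{t→∞} (-1/t) log δ_w(a_{w,t} u_x ℤ^{d+1})`. -/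
noncomputable def tauHatW (d : ℕ) (w : Fin d → ℝ) (x : Fin d → ℝ) : ℝ :=
  liminf (fun t : ℝ => (-1 / t) * Real.log (latticeDeltaW d w t x)) atTop

/-- The uniform `w`-exponent `σ̂_w(x)`. -/
noncomputable def sigmaHatw (d : ℕ) (w : Fin d → ℝ) (x : Fin d → ℝ) : ℝ :=
  sSup {σ : ℝ | ∃ Q₀ : ℝ, ∀ Q > Q₀,
    ∃ (p : Fin d → ℤ) (q : ℤ), q ≠ 0 ∧ |(q : ℝ)| ≤ Q ∧
      ∀ i, |(q : ℝ) * x i - (p i : ℝ)| ^ (1 / w i) < Q ^ (-σ)}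

section helpers

variable {d : ℕ} {w : Fin d → ℝ} {t : ℝ} {x : Fin d → ℝ}

@[simp] lemma latVec_last (m : Fin (d+1) → ℤ) :
    latVec w t x m (Fin.last d) = Real.exp (-t) * (m (Fin.last d) : ℝ) := by
  simp [latVec]

@[simp] lemma latVec_castSucc (m : Fin (d+1) → ℤ) (j : Fin d) :
    latVec w t x m (Fin.castSucc j)
      = Real.exp (w j * t) * ((m (Fin.castSucc j) : ℝ) + (m (Fin.last d) : ℝ) * x j) := by
  simp [latVec]

lemma wNorm_bddAbove (v : Fin (d+1) → ℝ) :
    BddAbove (Set.range fun i : Fin d => |v (Fin.castSucc i)| ^ (1 / w i)) :=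
  Set.Finite.bddAbove (Set.finite_range _)

lemma term_le_wNorm (v : Fin (d+1) → ℝ) (i : Fin d) :
    |v (Fin.castSucc i)| ^ (1 / w i) ≤ wNorm w v :=
  le_trans (le_ciSup (wNorm_bddAbove v) i) (le_max_left _ _)

lemma last_le_wNorm (v : Fin (d+1) → ℝ) : |v (Fin.last d)| ≤ wNorm w v :=
  le_max_right _ _

lemma wNorm_nonneg (v : Fin (d+1) → ℝ) : 0 ≤ wNorm w v :=
  le_trans (abs_nonneg _) (last_le_wNorm v)

lemma wNorm_le (hd : 0 < d) (v : Fin (d+1) → ℝ) {c : ℝ}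
    (h1 : ∀ i : Fin d, |v (Fin.castSucc i)| ^ (1 / w i) ≤ c)
    (h2 : |v (Fin.last d)| ≤ c) : wNorm w v ≤ c := by
  haveI : Nonempty (Fin d) := Fin.pos_iff_nonempty.mp hd
  exact max_le (ciSup_le h1) h2

lemma abs_exp_mul_rpow {wi : ℝ} (hwi : 0 < wi) (b : ℝ) :
    |Real.exp (wi * t) * b| ^ (1 / wi) = Real.exp t * |b| ^ (1 / wi) := by
  rw [abs_mul, abs_of_pos (Real.exp_pos _),
    Real.mul_rpow (Real.exp_pos _).le (abs_nonneg _),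
    Real.rpow_def_of_pos (Real.exp_pos _), Real.log_exp]
  congr 2
  field_simp

end helpers

section delta

variable {d : ℕ} {w : Fin d → ℝ} {x : Fin d → ℝ}

/-- The set defining `latticeDeltaW`. -/
def deltaSet (d : ℕ) (w : Fin d → ℝ) (t : ℝ) (x : Fin d → ℝ) : Set ℝ :=
  {r : ℝ | ∃ m : Fin (d + 1) → ℤ, m ≠ 0 ∧ r = wNorm w (latVec w t x m)}

lemma latticeDeltaW_eq (t : ℝ) : latticeDeltaW d w t x = sInf (deltaSet d w t x) := rfl

lemma deltaSet_nonempty (t : ℝ) : (deltaSet d w t x).Nonempty := by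
  refine ⟨_, fun _ => 1, ?_, rfl⟩
  intro h
  have := congrFun h (Fin.last d)
  simp at this

lemma deltaSet_bddBelow (t : ℝ) : BddBelow (deltaSet d w t x) := by
  refine ⟨0, ?_⟩
  rintro r ⟨m, -, rfl⟩
  exact wNorm_nonneg _

lemma exp_le_of_mem (hw : ∀ i, 0 < w i) {t r : ℝ} (hr : r ∈ deltaSet d w t x) :
    Real.exp (-|t|) ≤ r := by
  obtain ⟨m, hm, rfl⟩ := hr
  by_cases hq : m (Fin.last d) = 0
  · -- some middle coordinate is nonzero
    have hex : ∃ j : Fin d, m (Fin.castSucc j) ≠ 0 := by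
      by_contra hall
      push_neg at hall
      apply hm
      funext i
      refine Fin.lastCases ?_ ?_ i
      · exact hq
      · exact fun j => hall j
    obtain ⟨j, hj⟩ := hex
    have h1 : (1 : ℝ) ≤ |(m (Fin.castSucc j) : ℝ)| := by
      rw [← Int.cast_abs]
      exact_mod_cast Int.one_le_abs hj
    have key : Real.exp t ≤ |latVec w t x m (Fin.castSucc j)| ^ (1 / w j) := by
      rw [latVec_castSucc, hq]
      push_cast
      rw [zero_mul, add_zero, abs_exp_mul_rpow (hw j)]
      nth_rewrite 1 [← mul_one (Real.exp t)]
      apply mul_le_mul_of_nonneg_left _ (Real.exp_pos t).le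
      calc (1:ℝ) = 1 ^ (1 / w j) := (Real.one_rpow _).symm
        _ ≤ |(m (Fin.castSucc j) : ℝ)| ^ (1 / w j) :=
          Real.rpow_le_rpow zero_le_one h1 (one_div_nonneg.mpr (hw j).le)
    calc Real.exp (-|t|) ≤ Real.exp t := Real.exp_le_exp.mpr (neg_abs_le t)
      _ ≤ _ := key.trans (term_le_wNorm _ j)
  · have h1 : (1 : ℝ) ≤ |(m (Fin.last d) : ℝ)| := by
      rw [← Int.cast_abs]
      exact_mod_cast Int.one_le_abs hq
    have key : Real.exp (-t) ≤ |latVec w t x m (Fin.last d)| := by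
      rw [latVec_last, abs_mul, abs_of_pos (Real.exp_pos _)]
      nth_rewrite 1 [← mul_one (Real.exp (-t))]
      exact mul_le_mul_of_nonneg_left h1 (Real.exp_pos _).le
    calc Real.exp (-|t|) ≤ Real.exp (-t) := Real.exp_le_exp.mpr (neg_le_neg (le_abs_self t))
      _ ≤ _ := key.trans (last_le_wNorm _)

lemma delta_lb (hw : ∀ i, 0 < w i) (t : ℝ) :
    Real.exp (-|t|) ≤ latticeDeltaW d w t x :=
  le_csInf (deltaSet_nonempty t) fun _ hr => exp_le_of_mem hw hr

lemma delta_pos (hw : ∀ i, 0 < w i) (t : ℝ) : 0 < latticeDeltaW d w t x :=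
  lt_of_lt_of_le (Real.exp_pos _) (delta_lb hw t)

lemma delta_ub (hd : 0 < d) (hw : ∀ i, 0 < w i) (t : ℝ) :
    latticeDeltaW d w t x ≤ Real.exp t := by
  obtain ⟨j₀⟩ := Fin.pos_iff_nonempty.mp hd
  set m : Fin (d+1) → ℤ := fun i => if i = Fin.castSucc j₀ then 1 else 0 with hmdef
  have hm0 : m ≠ 0 := by
    intro h
    have := congrFun h (Fin.castSucc j₀)
    simp [hmdef] at this
  have hmlast : m (Fin.last d) = 0 := by
    rw [hmdef]
    simp only [ite_eq_right_iff]
    intro h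
    exact absurd h.symm (Fin.castSucc_lt_last j₀).ne
  have hnorm : wNorm w (latVec w t x m) ≤ Real.exp t := by
    apply wNorm_le hd
    · intro i
      rw [latVec_castSucc, hmlast]
      push_cast
      rw [zero_mul, add_zero, abs_exp_mul_rpow (hw i)]
      by_cases hij : Fin.castSucc i = Fin.castSucc j₀
      · rw [hmdef]
        simp only [if_pos hij, Int.cast_one, abs_one, Real.one_rpow, mul_one]
        exact le_refl _
      · rw [hmdef]
        simp only [if_neg hij, Int.cast_zero, abs_zero,
          Real.zero_rpow (ne_of_gt (one_div_pos.mpr (hw i))), mul_zero]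
        exact (Real.exp_pos t).le
    · rw [latVec_last, hmlast]
      simp
      positivity
  exact le_trans (csInf_le (deltaSet_bddBelow t) ⟨m, hm0, rfl⟩) hnorm

lemma delta_le_of_mem {t r : ℝ} (hr : r ∈ deltaSet d w t x) : latticeDeltaW d w t x ≤ r :=
  csInf_le (deltaSet_bddBelow t) hr

end delta

section main

variable {d : ℕ} {w : Fin d → ℝ} {x : Fin d → ℝ}

noncomputable def fFun (d : ℕ) (w : Fin d → ℝ) (x : Fin d → ℝ) : ℝ → ℝ :=
  fun t => (-1 / t) * Real.log (latticeDeltaW d w t x)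

noncomputable def tauHatW' (d : ℕ) (w : Fin d → ℝ) (x : Fin d → ℝ) : ℝ :=
  liminf (fFun d w x) atTop

def sigmaSet (d : ℕ) (w : Fin d → ℝ) (x : Fin d → ℝ) : Set ℝ :=
  {σ : ℝ | ∃ Q₀ : ℝ, ∀ Q > Q₀,
    ∃ (p : Fin d → ℤ) (q : ℤ), q ≠ 0 ∧ |(q : ℝ)| ≤ Q ∧
      ∀ i, |(q : ℝ) * x i - (p i : ℝ)| ^ (1 / w i) < Q ^ (-σ)}

lemma f_bounds (hd : 0 < d) (hw : ∀ i, 0 < w i) {t : ℝ} (ht : 1 ≤ t) :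
    -1 ≤ fFun d w x t ∧ fFun d w x t ≤ 1 := by
  have ht0 : (0:ℝ) < t := lt_of_lt_of_le one_pos ht
  set L := Real.log (latticeDeltaW d w t x) with hL
  have hL1 : L ≤ t := by
    have := Real.log_le_log (delta_pos (x := x) hw t) (delta_ub (x := x) hd hw t)
    rwa [Real.log_exp] at this
  have hL2 : -t ≤ L := by
    have := Real.log_le_log (Real.exp_pos (-|t|)) (delta_lb (x := x) hw t)
    rw [Real.log_exp, abs_of_pos ht0] at this
    exact this
  have heq : fFun d w x t = -(L/t) := by
    simp only [fFun, ← hL]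
    ring
  rw [heq]
  constructor
  · have : L / t ≤ 1 := (div_le_one ht0).mpr hL1
    linarith
  · have : -1 ≤ L / t := by
      rw [le_div_iff₀ ht0]
      linarith
    linarith

lemma f_bdd_below (hd : 0 < d) (hw : ∀ i, 0 < w i) :
    IsBoundedUnder (· ≥ ·) atTop (fFun d w x) := by
  refine ⟨-1, eventually_map.mpr ?_⟩
  filter_upwards [eventually_ge_atTop (1:ℝ)] with t ht
  exact (f_bounds hd hw ht).1

lemma f_cobdd (hd : 0 < d) (hw : ∀ i, 0 < w i) :
    IsCoboundedUnder (· ≥ ·) atTop (fFun d w x) := by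
  apply isCoboundedUnder_ge_of_eventually_le (l := atTop) (x := 1)
  filter_upwards [eventually_ge_atTop (1:ℝ)] with t ht
  exact (f_bounds hd hw ht).2

/-- Direction A: every `σ` below `(1+τ)/(1-τ)` belongs to the σ-set. -/
lemma mem_sigmaSet (hd : 0 < d) (hw : ∀ i, 0 < w i) {σ : ℝ}
    (hτ1 : tauHatW' d w x < 1)
    (hσ : σ < (1 + tauHatW' d w x) / (1 - tauHatW' d w x)) :
    σ ∈ sigmaSet d w x := by
  by_cases hσ0 : σ ≤ 0
  · -- trivial regime
    refine ⟨1, fun Q hQ => ⟨fun i => round (x i), 1, one_ne_zero, ?_, ?_⟩⟩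
    · rw [Int.cast_one, abs_one]; linarith
    · intro i
      simp only [Int.cast_one]
      have h1 : |(1:ℝ) * x i - (round (x i) : ℝ)| ≤ 1/2 := by
        rw [one_mul]
        exact abs_sub_round (x i)
      have h2 : |(1:ℝ) * x i - (round (x i) : ℝ)| ^ (1 / w i) ≤ (1/2 : ℝ) ^ (1 / w i) :=
        Real.rpow_le_rpow (abs_nonneg _) h1 (one_div_nonneg.mpr (hw i).le)
      have h3 : ((1:ℝ)/2) ^ (1 / w i) < 1 :=
        Real.rpow_lt_one (by norm_num) (by norm_num) (one_div_pos.mpr (hw i))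
      have h4 : (1:ℝ) ≤ Q ^ (-σ) := by
        have := Real.rpow_le_rpow_of_exponent_le (le_of_lt hQ) (neg_nonneg.mpr hσ0)
        rwa [Real.rpow_zero] at this
      calc |(1:ℝ) * x i - (round (x i) : ℝ)| ^ (1 / w i) ≤ (1/2 : ℝ) ^ (1 / w i) := h2
        _ < 1 := h3
        _ ≤ Q ^ (-σ) := h4
  · push_neg at hσ0
    set τ := tauHatW' d w x with hτdef
    have h1τ : (0:ℝ) < 1 - τ := by linarith
    set τ' := (σ - 1) / (σ + 1) with hτ'def
    have hσ1 : (0:ℝ) < σ + 1 := by linarith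
    have hτ'1 : τ' < 1 := by rw [hτ'def, div_lt_one hσ1]; linarith
    have hτ'n1 : -1 < τ' := by rw [hτ'def, lt_div_iff₀ hσ1]; linarith
    have h1τ' : (0:ℝ) < 1 - τ' := by linarith
    have h1τ'p : (0:ℝ) < 1 + τ' := by linarith
    have hid : σ * (1 - τ') = 1 + τ' := by
      rw [hτ'def]
      field_simp
      ring
    have hτ'τ : τ' < τ := by
      have hcross : σ * (1 - τ) < 1 + τ := by
        have h := (lt_div_iff₀ h1τ).mp hσ
        linarith
      rw [hτ'def, div_lt_iff₀ hσ1]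
      nlinarith [hcross]
    have hEv : ∀ᶠ t in atTop, τ' < fFun d w x t :=
      eventually_lt_of_lt_liminf (by rw [hτdef] at hτ'τ; exact hτ'τ) (f_bdd_below hd hw)
    obtain ⟨T₀, hT₀⟩ := eventually_atTop.mp (hEv.and (eventually_ge_atTop (1:ℝ)))
    refine ⟨max 1 (Real.exp ((1 - τ') * T₀)), fun Q hQ => ?_⟩
    have hQ1 : (1:ℝ) < Q := lt_of_le_of_lt (le_max_left _ _) hQ
    have hQ0 : (0:ℝ) < Q := by linarith
    have hlogQ : (1 - τ') * T₀ < Real.log Q :=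
      (Real.lt_log_iff_exp_lt hQ0).mpr (lt_of_le_of_lt (le_max_right _ _) hQ)
    set t := Real.log Q / (1 - τ') with htdef
    have htT : T₀ ≤ t := by rw [htdef, le_div_iff₀ h1τ']; linarith
    obtain ⟨hft, ht1⟩ := hT₀ t htT
    have ht0 : (0:ℝ) < t := lt_of_lt_of_le one_pos ht1
    have hlogQt : Real.log Q = (1 - τ') * t := by
      rw [htdef, mul_div_cancel₀ _ h1τ'.ne']
    have hexpQ : Real.exp ((1 - τ') * t) = Q := by
      rw [← hlogQt, Real.exp_log hQ0]
    -- δ t < exp (-τ' * t)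
    have hL : Real.log (latticeDeltaW d w t x) < -τ' * t := by
      have heq : fFun d w x t = -(Real.log (latticeDeltaW d w t x) / t) := by
        simp only [fFun]; ring
      rw [heq] at hft
      have : Real.log (latticeDeltaW d w t x) / t < -τ' := by linarith
      have := (div_lt_iff₀ ht0).mp this
      linarith
    have hδ : latticeDeltaW d w t x < Real.exp (-τ' * t) := by
      rw [← Real.exp_log (delta_pos hw t)]
      exact Real.exp_lt_exp.mpr hL
    obtain ⟨r, hrmem, hr⟩ := exists_lt_of_csInf_lt (deltaSet_nonempty t) hδ
    obtain ⟨m, hm0, rfl⟩ := hrmem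
    set q := m (Fin.last d) with hqdef
    -- middle coordinate bounds
    have hmid : ∀ i : Fin d,
        |(m (Fin.castSucc i) : ℝ) + (q : ℝ) * x i| ^ (1 / w i) < Real.exp (-(1 + τ') * t) := by
      intro i
      have h5 := (term_le_wNorm (w := w) (latVec w t x m) i).trans_lt hr
      rw [latVec_castSucc, abs_exp_mul_rpow (hw i)] at h5
      have h6 : |(m (Fin.castSucc i) : ℝ) + (q:ℝ) * x i| ^ (1 / w i)
          < Real.exp (-τ' * t) / Real.exp t := by
        rw [lt_div_iff₀ (Real.exp_pos t)]
        calc |(m (Fin.castSucc i) : ℝ) + (q:ℝ) * x i| ^ (1 / w i) * Real.exp t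
            = Real.exp t * |(m (Fin.castSucc i) : ℝ) + (q:ℝ) * x i| ^ (1 / w i) := by ring
          _ < Real.exp (-τ' * t) := h5
      rwa [← Real.exp_sub, show -τ' * t - t = -(1 + τ') * t by ring] at h6
    -- q ≠ 0
    have hq0 : q ≠ 0 := by
      intro hq
      apply hm0
      funext i
      refine Fin.lastCases ?_ ?_ i
      · exact hq
      · intro j
        by_contra hj
        have h1 : (1:ℝ) ≤ |(m (Fin.castSucc j) : ℝ)| := by
          rw [← Int.cast_abs]
          exact_mod_cast Int.one_le_abs hj
        have h2 : (1:ℝ) ≤ |(m (Fin.castSucc j) : ℝ) + (q:ℝ) * x j| ^ (1 / w j) := by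
          rw [hq]
          push_cast
          rw [zero_mul, add_zero]
          calc (1:ℝ) = 1 ^ (1 / w j) := (Real.one_rpow _).symm
            _ ≤ _ := Real.rpow_le_rpow zero_le_one h1 (one_div_nonneg.mpr (hw j).le)
        have h3 := lt_of_le_of_lt h2 (hmid j)
        have h4 : (0:ℝ) < -(1 + τ') * t := Real.one_lt_exp_iff.mp h3
        nlinarith [h1τ'p, ht0]
    -- |q| < Q
    have hqQ : |(q:ℝ)| < Q := by
      have h5 := (last_le_wNorm (w := w) (latVec w t x m)).trans_lt hr
      rw [latVec_last, abs_mul, abs_of_pos (Real.exp_pos _)] at h5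
      have h6 : |(q:ℝ)| < Real.exp (-τ' * t) / Real.exp (-t) := by
        rw [lt_div_iff₀ (Real.exp_pos _)]
        calc |(q:ℝ)| * Real.exp (-t) = Real.exp (-t) * |(q:ℝ)| := by ring
          _ < Real.exp (-τ' * t) := h5
      rwa [← Real.exp_sub, show -τ' * t - -t = (1 - τ') * t by ring, hexpQ] at h6
    -- conclude
    refine ⟨fun i => -(m (Fin.castSucc i)), q, hq0, le_of_lt hqQ, fun i => ?_⟩
    have habs : (q:ℝ) * x i - ((-(m (Fin.castSucc i)) : ℤ) : ℝ)
        = (m (Fin.castSucc i) : ℝ) + (q:ℝ) * x i := by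
      push_cast
      ring
    rw [habs]
    have hrpow : (Q : ℝ) ^ (-σ) = Real.exp (-(1 + τ') * t) := by
      rw [Real.rpow_def_of_pos hQ0, hlogQt]
      congr 1
      nlinarith [hid]
    rw [hrpow]
    exact hmid i

end main

section mainB

variable {d : ℕ} {w : Fin d → ℝ} {x : Fin d → ℝ}

set_option maxHeartbeats 1000000 in
/-- Direction B: every member of the σ-set is at most `(1+τ)/(1-τ)`. -/
lemma sigmaSet_le (hd : 0 < d) (hw : ∀ i, 0 < w i)
    (hτ1 : tauHatW' d w x < 1) {σ : ℝ} (hσS : σ ∈ sigmaSet d w x) :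
    σ ≤ (1 + tauHatW' d w x) / (1 - tauHatW' d w x) := by
  set τ := tauHatW' d w x with hτdef
  have hlim : liminf (fFun d w x) atTop = τ := rfl
  clear_value τ
  set B := (1 + τ) / (1 - τ) with hBdef
  clear_value B
  by_contra hcon
  push_neg at hcon
  have h1τ : (0:ℝ) < 1 - τ := by linarith
  have hBn1 : -1 < B := by
    have hB1 : B + 1 = 2 / (1 - τ) := by
      rw [hBdef]
      field_simp
      norm_num
    have : (0:ℝ) < 2 / (1 - τ) := div_pos two_pos h1τ
    linarith
  set σ₀ := (B + σ) / 2 with hσ₀def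
  clear_value σ₀
  have hσ₀B : B < σ₀ := by rw [hσ₀def]; linarith
  have hσ₀σ : σ₀ < σ := by rw [hσ₀def]; linarith
  have hσ₀1 : (0:ℝ) < σ₀ + 1 := by linarith
  set τ''' := (σ₀ - 1) / (σ₀ + 1) with hτ'''def
  clear_value τ'''
  have hτ'''1 : τ''' < 1 := by rw [hτ'''def, div_lt_one hσ₀1]; linarith
  have h1τ''' : (0:ℝ) < 1 - τ''' := by linarith
  have hττ''' : τ < τ''' := by
    have hcross : 1 + τ < σ₀ * (1 - τ) := by
      have hB' := hσ₀B
      rw [hBdef] at hB'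
      have h := (div_lt_iff₀ h1τ).mp hB'
      linarith
    rw [hτ'''def, lt_div_iff₀ hσ₀1]
    nlinarith [hcross]
  have hid : σ₀ * (1 - τ''') = 1 + τ''' := by
    rw [hτ'''def]
    field_simp
    ring
  set τ'' := (τ + τ''') / 2 with hτ''def
  clear_value τ''
  have hτ''a : τ < τ'' := by rw [hτ''def]; linarith
  have hτ''b : τ'' < τ''' := by rw [hτ''def]; linarith
  obtain ⟨Q₀, hQ₀⟩ := hσS
  have hfreq : ∃ᶠ t in atTop, fFun d w x t < τ'' :=
    frequently_lt_of_liminf_lt (f_cobdd hd hw) (by rw [hlim]; exact hτ''a)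
  set T := max 1 ((Real.log (max 1 Q₀) + 1) / (1 - τ''')) with hTdef
  clear_value T
  obtain ⟨t, hft, htT⟩ := (hfreq.and_eventually (eventually_ge_atTop T)).exists
  rw [hTdef] at htT
  have ht1 : (1:ℝ) ≤ t := le_trans (le_max_left _ _) htT
  have ht0 : (0:ℝ) < t := lt_of_lt_of_le one_pos ht1
  have hQbig : Q₀ < Real.exp ((1 - τ''') * t) := by
    have h5 : Real.log (max 1 Q₀) + 1 ≤ (1 - τ''') * t := by
      have h6 := le_trans (le_max_right _ _) htT
      rw [div_le_iff₀ h1τ'''] at h6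
      linarith
    calc Q₀ ≤ max 1 Q₀ := le_max_right _ _
      _ = Real.exp (Real.log (max 1 Q₀)) :=
        (Real.exp_log (lt_of_lt_of_le one_pos (le_max_left _ _))).symm
      _ < Real.exp ((1 - τ''') * t) := Real.exp_lt_exp.mpr (by linarith)
  set Q := Real.exp ((1 - τ''') * t) with hQdef
  clear_value Q
  have hQ0 : (0:ℝ) < Q := by rw [hQdef]; exact Real.exp_pos _
  have hlogQ : Real.log Q = (1 - τ''') * t := by rw [hQdef, Real.log_exp]
  obtain ⟨p, q, hq0, hqQ, hpq⟩ := hQ₀ Q hQbig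
  set m : Fin (d + 1) → ℤ := fun i =>
    Fin.lastCases (motive := fun _ => ℤ) q (fun j => -(p j)) i with hmdef
  clear_value m
  have hmlast : m (Fin.last d) = q := by rw [hmdef]; simp
  have hmcast : ∀ j : Fin d, m (Fin.castSucc j) = -(p j) := by
    intro j; rw [hmdef]; simp
  have hm0 : m ≠ 0 := by
    intro h
    apply hq0
    have := congrFun h (Fin.last d)
    rwa [hmlast] at this
  -- wNorm bound
  have hwn : wNorm w (latVec w t x m) ≤ Real.exp (-τ''' * t) := by
    apply wNorm_le hd
    · intro i
      rw [latVec_castSucc, hmcast, hmlast, abs_exp_mul_rpow (hw i)]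
      have habs : ((-(p i) : ℤ) : ℝ) + (q : ℝ) * x i = (q:ℝ) * x i - (p i : ℝ) := by
        push_cast
        ring
      rw [habs]
      have h6 := hpq i
      have hQσ : Q ^ (-σ) = Real.exp (-(σ * (1 - τ''')) * t) := by
        rw [Real.rpow_def_of_pos hQ0, hlogQ]
        congr 1
        ring
      have h7 : Real.exp t * |(q:ℝ) * x i - (p i : ℝ)| ^ (1 / w i)
          < Real.exp t * Q ^ (-σ) := by
        apply mul_lt_mul_of_pos_left h6 (Real.exp_pos t)
      have h8 : Real.exp t * Q ^ (-σ) ≤ Real.exp (-τ''' * t) := by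
        rw [hQσ, ← Real.exp_add]
        apply Real.exp_le_exp.mpr
        have h9 : 1 + τ''' ≤ σ * (1 - τ''') := by nlinarith [hσ₀σ, h1τ''', hid]
        nlinarith [ht0, h9]
      linarith
    · rw [latVec_last, hmlast, abs_mul, abs_of_pos (Real.exp_pos _)]
      calc Real.exp (-t) * |(q:ℝ)| ≤ Real.exp (-t) * Q :=
            mul_le_mul_of_nonneg_left hqQ (Real.exp_pos _).le
        _ = Real.exp (-τ''' * t) := by
            rw [hQdef, ← Real.exp_add]
            congr 1
            ring
  have hδle : latticeDeltaW d w t x ≤ Real.exp (-τ''' * t) :=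
    le_trans (delta_le_of_mem ⟨m, hm0, rfl⟩) hwn
  have hδgt : Real.exp (-τ'' * t) < latticeDeltaW d w t x := by
    have heq : fFun d w x t = -(Real.log (latticeDeltaW d w t x) / t) := by
      simp only [fFun]; ring
    rw [heq] at hft
    have h10 : -τ'' < Real.log (latticeDeltaW d w t x) / t := by linarith
    have h11 := (lt_div_iff₀ ht0).mp h10
    rw [← Real.exp_log (delta_pos hw t)]
    apply Real.exp_lt_exp.mpr
    linarith
  have hfinal : Real.exp (-τ'' * t) < Real.exp (-τ''' * t) := lt_of_lt_of_le hδgt hδle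
  have h12 := Real.exp_lt_exp.mp hfinal
  nlinarith [ht0, hτ''b]

end mainB

theorem dani_correspondence_single_weight' (d : ℕ) (hd : 0 < d) (w : Fin d → ℝ)
    (hw : ∀ i, 0 < w i ∧ w i < 1) (hw1 : ∑ i, w i = 1)
    (x : Fin d → ℝ) (hτ : tauHatW' d w x < 1) :
    sSup (sigmaSet d w x) = (1 + tauHatW' d w x) / (1 - tauHatW' d w x) := by
  have hw' : ∀ i, 0 < w i := fun i => (hw i).1
  set τ := tauHatW' d w x with hτdef
  set B := (1 + τ) / (1 - τ) with hBdef
  have hub : ∀ σ ∈ sigmaSet d w x, σ ≤ B := fun σ hσ => sigmaSet_le hd hw' hτ hσ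
  have hmem : ∀ σ : ℝ, σ < B → σ ∈ sigmaSet d w x := fun σ hσ => mem_sigmaSet hd hw' hτ hσ
  have hne : (sigmaSet d w x).Nonempty := ⟨B - 1, hmem _ (by linarith)⟩
  have hbdd : BddAbove (sigmaSet d w x) := ⟨B, hub⟩
  apply le_antisymm (csSup_le hne hub)
  by_contra hlt
  push_neg at hlt
  have hmid : (sSup (sigmaSet d w x) + B) / 2 ∈ sigmaSet d w x := hmem _ (by linarith)
  have := le_csSup hbdd hmid
  linarith


/-- For a single proper weight `w` and `x ∈ ℝ^d`, if the divergence rate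
`τ := τ̂_w(x)` (defined via the `w`-quasinorm on the lattice) satisfies `τ < 1`, then
`σ̂_w(x) = (1 + τ)/(1 - τ)`. -/
theorem dani_correspondence_single_weight (d : ℕ) (hd : 0 < d) (w : Fin d → ℝ)
    (hw : ∀ i, 0 < w i ∧ w i < 1) (hw1 : ∑ i, w i = 1)
    (x : Fin d → ℝ) (hτ : tauHatW d w x < 1) :
    sigmaHatw d w x = (1 + tauHatW d w x) / (1 - tauHatW d w x) := by
  exact dani_correspondence_single_weight' d hd w hw hw1 x hτ
end

section
/- Let φ: ℝ^s → ℝ be an affine map, A an affine subspace of ℝ^n realized as d_H = |φ_H| after composition, B ⊂ U a ball, and g: U → ℝ^s continuous with image g(B) containing an affine basis of ℝ^s and g(B) ⊆ S for a fixed bounded simplex S. Then there is a constant c = c(g,B) > 0, independent of the affine map φ, such that sup_{y∈S} |φ(y)| ≤ c · sup_{x∈B} |φ(g(x))|. -/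
/-- **Comparison lemma for affine functionals.** Let `S ⊂ ℝ^s` be a bounded set
(a bounded simplex), `B ⊂ ℝ^d`, and `g : ℝ^d → ℝ^s` with `g(B) ⊆ S` such that `g(B)`
contains an affine basis of `ℝ^s` (i.e. `s + 1` points of `B` whose images are affinely
independent). Then there is a constant `c > 0`, depending only on `g` and `B` and
independent of the affine map, such that for every affine map `φ : ℝ^s → ℝ`,
`sup_{y ∈ S} |φ y| ≤ c · sup_{x ∈ B} |φ (g x)|`. -/
theorem affine_sup_comparison (d s : ℕ) (B : Set (Fin d → ℝ)) (S : Set (Fin s → ℝ))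
    (hS : Bornology.IsBounded S)
    (g : (Fin d → ℝ) → (Fin s → ℝ)) (hgB : g '' B ⊆ S)
    (hbasis : ∃ y : Fin (s + 1) → (Fin d → ℝ), (∀ j, y j ∈ B) ∧
      AffineIndependent ℝ (fun j => g (y j))) :
    ∃ c > (0 : ℝ), ∀ φ : (Fin s → ℝ) →ᵃ[ℝ] ℝ,
      sSup ((fun y => |φ y|) '' S) ≤ c * sSup ((fun x => |φ (g x)|) '' B) := by
  obtain ⟨y, hyB, hp⟩ := hbasis
  set p : Fin (s + 1) → (Fin s → ℝ) := fun j => g (y j) with hpdef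
  have hpS : ∀ j, p j ∈ S := fun j => hgB ⟨y j, hyB j, rfl⟩
  have hSne : S.Nonempty := ⟨p 0, hpS 0⟩
  have hspan : affineSpan ℝ (Set.range p) = ⊤ := by
    rw [hp.affineSpan_eq_top_iff_card_eq_finrank_add_one]
    simp
  let b : AffineBasis (Fin (s + 1)) ℝ (Fin s → ℝ) := ⟨p, hp, hspan⟩
  have hK : IsCompact (closure S) := hS.isCompact_closure
  have hcont : ContinuousOn (fun z => (fun j => b.coord j z : Fin (s + 1) → ℝ))
      (closure S) :=
    (continuous_pi fun j => (b.coord j).continuous_of_finiteDimensional).continuousOn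
  obtain ⟨C, hC⟩ := hK.exists_bound_of_continuousOn hcont
  have hC0 : 0 ≤ C := le_trans (norm_nonneg _) (hC (p 0) (subset_closure (hpS 0)))
  have hCj : ∀ j, ∀ z ∈ S, |b.coord j z| ≤ C := by
    intro j z hz
    calc |b.coord j z| = ‖(fun i => b.coord i z : Fin (s + 1) → ℝ) j‖ := by
          simp [Real.norm_eq_abs]
      _ ≤ ‖(fun i => b.coord i z : Fin (s + 1) → ℝ)‖ :=
          norm_le_pi_norm (fun i => (b.coord i) z) j
      _ ≤ C := hC z (subset_closure hz)
  refine ⟨(s + 1) * C + 1, by positivity, fun φ => ?_⟩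
  -- bound for |φ| on closure of S
  obtain ⟨D, hD⟩ := hK.exists_bound_of_continuousOn
    (φ.continuous_of_finiteDimensional.continuousOn)
  set R := sSup ((fun x => |φ (g x)|) '' B) with hRdef
  have hbdd : BddAbove ((fun x => |φ (g x)|) '' B) := by
    refine ⟨D, fun r hr => ?_⟩
    obtain ⟨x, hxB, rfl⟩ := hr
    have := hD (g x) (subset_closure (hgB ⟨x, hxB, rfl⟩))
    simpa [Real.norm_eq_abs] using this
  have hRj : ∀ j, |φ (p j)| ≤ R := fun j => le_csSup hbdd ⟨y j, hyB j, rfl⟩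
  have hR0 : 0 ≤ R := le_trans (abs_nonneg _) (hRj 0)
  refine csSup_le (hSne.image _) ?_
  rintro r ⟨z, hzS, rfl⟩
  have hw1 : ∑ j, b.coord j z = 1 := b.sum_coord_apply_eq_one z
  have hz : (Finset.univ.affineCombination ℝ p fun j => b.coord j z) = z :=
    b.affineCombination_coord_eq_self z
  have hφz : φ z = ∑ j, b.coord j z * φ (p j) := by
    conv_lhs => rw [← hz]
    rw [Finset.map_affineCombination _ _ _ hw1,
      Finset.affineCombination_eq_linear_combination _ _ _ hw1]
    simp [smul_eq_mul]
  calc |φ z| = |∑ j, b.coord j z * φ (p j)| := by rw [hφz]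
    _ ≤ ∑ j, |b.coord j z * φ (p j)| := Finset.abs_sum_le_sum_abs _ _
    _ ≤ ∑ _j : Fin (s + 1), C * R := by
        refine Finset.sum_le_sum fun j _ => ?_
        rw [abs_mul]
        exact mul_le_mul (hCj j z hzS) (hRj j) (abs_nonneg _) hC0
    _ = (s + 1) * C * R := by
        simp [Finset.sum_const, Finset.card_univ, mul_assoc]
    _ ≤ ((s + 1) * C + 1) * R := by nlinarith
end
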